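/- arXiv:1610.07077 — 5 statements merged into one kernel-verified Lean document; each statement's English description precedes it below -/
import Mathlib

section
/- Let p be an odd prime. The cardinality of X*_{-2}(F_p) = {(x,y,z) ∈ F_p³ : x² + y² + z² = x·y·z, (x,y,z) ≠ (0,0,0)} equals p(p+3) if p ≡ 1 (mod 4), and equals p(p−3) if p ≡ 3 (mod 4). -/
open Finset

namespace MarkoffAux

variable {p : ℕ} [Fact p.Prime]

local notation "χ" => quadraticChar (ZMod p)

lemma ringChar_ne_two (hp : p ≠ 2) : ringChar (ZMod p) ≠ 2 := by
  rw [ZMod.ringChar_zmod_n]; exact hp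

lemma two_ne_zero' (hp : p ≠ 2) : (2 : ZMod p) ≠ 0 :=
  Ring.two_ne_zero (ringChar_ne_two hp)

lemma four_ne_zero (hp : p ≠ 2) : (4 : ZMod p) ≠ 0 := by
  have h2 := two_ne_zero' (p := p) hp
  have : (4 : ZMod p) = 2 * 2 := by norm_num
  rw [this]; exact mul_ne_zero h2 h2

/-- number of square roots -/
lemma card_sqrts (hp : p ≠ 2) (a : ZMod p) :
    (((univ : Finset (ZMod p)).filter (fun x => x ^ 2 = a)).card : ℤ) = χ a + 1 := by
  have := quadraticChar_card_sqrts (F := ZMod p) (ringChar_ne_two hp) a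
  rw [← this]
  congr 1
  simp [Set.toFinset_setOf]

lemma sum_sq_eq (hp : p ≠ 2) (g : ZMod p → ℤ) :
    ∑ x : ZMod p, g (x ^ 2) = ∑ a : ZMod p, (χ a + 1) * g a := by
  classical
  rw [← Finset.sum_fiberwise' (univ : Finset (ZMod p)) (fun x => x ^ 2) g]
  refine Finset.sum_congr rfl fun a _ => ?_
  rw [Finset.sum_const, ← card_sqrts hp a]
  simp [nsmul_eq_mul]

lemma chi_inv (hp : p ≠ 2) {A : ZMod p} (hA : A ≠ 0) : χ A⁻¹ = χ A := by
  have h1 : χ A * χ A⁻¹ = 1 := by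
    rw [← map_mul, mul_inv_cancel₀ hA, map_one]
  have h2 : χ A * χ A = 1 := by
    have := quadraticChar_sq_one (F := ZMod p) hA
    rwa [sq] at this
  exact mul_left_cancel₀ (by rintro h; rw [h, zero_mul] at h2; exact one_ne_zero h2.symm) (h1.trans h2.symm)

/-- key sum: ∑ χ(s)χ(s+c) = -1 for c ≠ 0 -/
lemma sum_chi_mul (hp : p ≠ 2) {c : ZMod p} (hc : c ≠ 0) :
    ∑ s : ZMod p, χ s * χ (s + c) = -1 := by
  classical
  have h0 : ∑ s : ZMod p, χ s * χ (s + c)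
      = ∑ s ∈ (univ : Finset (ZMod p)).erase 0, χ s * χ (s + c) := by
    rw [Finset.sum_erase_eq_sub (mem_univ 0)]
    simp
  rw [h0]
  have h1 : ∑ s ∈ (univ : Finset (ZMod p)).erase 0, χ s * χ (s + c)
      = ∑ w ∈ (univ : Finset (ZMod p)).erase 1, χ w := by
    refine Finset.sum_nbij' (fun s => 1 + c * s⁻¹) (fun w => c * (w - 1)⁻¹) ?_ ?_ ?_ ?_ ?_
    · intro s hs
      rw [mem_erase] at hs ⊢
      refine ⟨?_, mem_univ _⟩
      have hs0 := hs.1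
      intro h
      have : c * s⁻¹ = 0 := by linear_combination h
      exact (mul_ne_zero hc (inv_ne_zero hs0)) this
    · intro w hw
      rw [mem_erase] at hw ⊢
      exact ⟨mul_ne_zero hc (inv_ne_zero (sub_ne_zero.mpr hw.1)), mem_univ _⟩
    · intro s hs
      rw [mem_erase] at hs
      have hs0 := hs.1
      field_simp
      simp [hc]
    · intro w hw
      rw [mem_erase] at hw
      have hw1 : w - 1 ≠ 0 := sub_ne_zero.mpr hw.1
      field_simp
      ring
    · intro s hs
      rw [mem_erase] at hs
      have hs0 := hs.1
      have key : s * (s + c) = s ^ 2 * (1 + c * s⁻¹) := by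
        field_simp
      calc χ s * χ (s + c) = χ (s * (s + c)) := (map_mul _ _ _).symm
        _ = χ (s ^ 2 * (1 + c * s⁻¹)) := by rw [key]
        _ = χ (s ^ 2) * χ (1 + c * s⁻¹) := map_mul _ _ _
        _ = χ (1 + c * s⁻¹) := by rw [quadraticChar_sq_one' (F := ZMod p) hs0, one_mul]
  rw [h1, Finset.sum_erase_eq_sub (mem_univ 1),
    quadraticChar_sum_zero (ringChar_ne_two hp), map_one]
  norm_num

/-- ∑ χ(A x² + c) = -χ A for A, c ≠ 0 -/
lemma sum_chi_quad (hp : p ≠ 2) {A c : ZMod p} (hA : A ≠ 0) (hc : c ≠ 0) :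
    ∑ x : ZMod p, χ (A * x ^ 2 + c) = - χ A := by
  classical
  have h := sum_sq_eq hp (fun a => χ (A * a + c))
  rw [h]
  have hsplit : ∑ a : ZMod p, (χ a + 1) * χ (A * a + c)
      = (∑ a : ZMod p, χ a * χ (A * a + c)) + ∑ a : ZMod p, χ (A * a + c) := by
    rw [← Finset.sum_add_distrib]
    exact Finset.sum_congr rfl fun a _ => by ring
  rw [hsplit]
  have h2 : ∑ a : ZMod p, χ (A * a + c) = 0 := by
    have hbij : Function.Bijective (fun a : ZMod p => A * a + c) := by
      refine Finite.injective_iff_bijective.mp ?_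
      intro a b hab
      simp only at hab
      exact mul_left_cancel₀ hA (by linear_combination hab)
    rw [Function.Bijective.sum_comp hbij (fun b => χ b)]
    exact quadraticChar_sum_zero (ringChar_ne_two hp)
  have h1 : ∑ a : ZMod p, χ a * χ (A * a + c) = - χ A := by
    have hbij : Function.Bijective (fun b : ZMod p => A⁻¹ * b) := by
      refine Finite.injective_iff_bijective.mp ?_
      intro a b hab
      simpa [inv_ne_zero hA] using mul_left_cancel₀ (inv_ne_zero hA) hab
    have := Function.Bijective.sum_comp hbij (fun a => χ a * χ (A * a + c))
    rw [← this]
    have heq : ∀ b : ZMod p, χ (A⁻¹ * b) * χ (A * (A⁻¹ * b) + c) = χ A⁻¹ * (χ b * χ (b + c)) := by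
      intro b
      rw [← mul_assoc A, mul_inv_cancel₀ hA, one_mul, map_mul, mul_assoc]
    calc ∑ b : ZMod p, χ (A⁻¹ * b) * χ (A * (A⁻¹ * b) + c)
        = ∑ b : ZMod p, χ A⁻¹ * (χ b * χ (b + c)) := Finset.sum_congr rfl fun b _ => heq b
      _ = χ A⁻¹ * ∑ b : ZMod p, χ b * χ (b + c) := by rw [Finset.mul_sum]
      _ = - χ A := by rw [sum_chi_mul hp hc, chi_inv hp hA]; ring
  rw [h1, h2, add_zero]

lemma sum_chi_sq_add (hp : p ≠ 2) {c : ZMod p} (hc : c ≠ 0) :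
    ∑ x : ZMod p, χ (x ^ 2 + c) = -1 := by
  have := sum_chi_quad hp (A := 1) one_ne_zero hc
  simp only [one_mul, map_one] at this
  exact this


lemma chi_neg_sixteen (hp : p ≠ 2) : χ (-16 : ZMod p) = χ (-1) := by
  have h : (-16 : ZMod p) = (-1) * 4 ^ 2 := by norm_num
  rw [h, map_mul, quadraticChar_sq_one' (four_ne_zero hp), mul_one]

lemma sum_chi_sq (hp : p ≠ 2) : ∑ x : ZMod p, χ (x ^ 2) = (p : ℤ) - 1 := by
  classical
  rw [← Finset.sum_erase_add univ _ (mem_univ (0 : ZMod p))]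
  have h0 : χ ((0 : ZMod p) ^ 2) = 0 := by
    simp [quadraticChar_zero]
  rw [h0, add_zero]
  have h1 : ∑ x ∈ (univ : Finset (ZMod p)).erase 0, χ (x ^ 2)
      = ∑ x ∈ (univ : Finset (ZMod p)).erase 0, (1 : ℤ) := by
    refine Finset.sum_congr rfl fun x hx => ?_
    rw [mem_erase] at hx
    exact quadraticChar_sq_one' hx.1
  rw [h1, Finset.sum_const, Finset.card_erase_of_mem (mem_univ _), Finset.card_univ,
    ZMod.card, nsmul_eq_mul, mul_one]
  have hp1 : 1 ≤ p := (Fact.out : p.Prime).one_lt.le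
  push_cast [Nat.cast_sub hp1]
  ring

lemma G_eval (hp : p ≠ 2) (y : ZMod p) :
    ∑ x : ZMod p, χ ((y ^ 2 - 4) * x ^ 2 - 4 * y ^ 2)
      = - χ (y ^ 2 - 4) + ((if y = 0 then χ (-1) * p else 0)
        + (if y = 2 then χ (-1) * p else 0) + (if y = -2 then χ (-1) * p else 0)) := by
  classical
  by_cases h0 : y = 0
  · subst h0
    have h2 : (0 : ZMod p) ≠ 2 := fun h => two_ne_zero' hp h.symm
    have hm2 : (0 : ZMod p) ≠ -2 := by
      intro h
      exact four_ne_zero hp (by linear_combination 2 * h)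
    simp only [if_pos rfl, if_neg h2, if_neg hm2, add_zero, if_true]
    have harg : ∀ x : ZMod p, ((0 : ZMod p) ^ 2 - 4) * x ^ 2 - 4 * 0 ^ 2 = (-4) * x ^ 2 := by
      intro x; ring
    have hsum : ∑ x : ZMod p, χ (((0 : ZMod p) ^ 2 - 4) * x ^ 2 - 4 * 0 ^ 2)
        = ∑ x : ZMod p, χ (-4) * χ (x ^ 2) := by
      refine Finset.sum_congr rfl fun x _ => ?_
      rw [harg x, map_mul]
    have h4 : χ (-4 : ZMod p) = χ (-1 : ZMod p) := by
      have : (-4 : ZMod p) = (-1) * 2 ^ 2 := by norm_num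
      rw [this, map_mul, quadraticChar_sq_one' (two_ne_zero' hp), mul_one]
    have h04 : ((0 : ZMod p) ^ 2 - 4) = -4 := by ring
    rw [hsum, ← Finset.mul_sum, sum_chi_sq hp, h04, h4]
    ring
  · by_cases h2 : y = 2
    · subst h2
      have hne0 : (2 : ZMod p) ≠ 0 := two_ne_zero' hp
      have hne2 : (2 : ZMod p) ≠ -2 := by
        intro h
        exact four_ne_zero hp (by linear_combination h)
      simp only [if_neg h0, if_neg hne2, if_pos rfl, add_zero, zero_add, if_true]
      have harg : ∀ x : ZMod p, ((2 : ZMod p) ^ 2 - 4) * x ^ 2 - 4 * 2 ^ 2 = -16 := by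
        intro x; ring
      have hsum : ∑ x : ZMod p, χ (((2 : ZMod p) ^ 2 - 4) * x ^ 2 - 4 * 2 ^ 2)
          = ∑ _x : ZMod p, χ (-16 : ZMod p) := by
        refine Finset.sum_congr rfl fun x _ => ?_
        rw [harg x]
      rw [hsum, Finset.sum_const, Finset.card_univ, ZMod.card, nsmul_eq_mul,
        chi_neg_sixteen hp]
      have h224 : ((2 : ZMod p) ^ 2 - 4) = 0 := by ring
      rw [h224, quadraticChar_zero]
      ring
    · by_cases hm2 : y = -2
      · subst hm2
        simp only [if_neg h0, if_neg h2, if_pos rfl, add_zero, zero_add, if_true]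
        have harg : ∀ x : ZMod p, (((-2 : ZMod p)) ^ 2 - 4) * x ^ 2 - 4 * (-2 : ZMod p) ^ 2 = -16 := by
          intro x; ring
        have hsum : ∑ x : ZMod p, χ (((-2 : ZMod p) ^ 2 - 4) * x ^ 2 - 4 * (-2 : ZMod p) ^ 2)
            = ∑ _x : ZMod p, χ (-16 : ZMod p) := by
          refine Finset.sum_congr rfl fun x _ => ?_
          rw [harg x]
        rw [hsum, Finset.sum_const, Finset.card_univ, ZMod.card, nsmul_eq_mul,
          chi_neg_sixteen hp]
        have h224 : ((-2 : ZMod p) ^ 2 - 4) = 0 := by ring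
        rw [h224, quadraticChar_zero]
        ring
      · simp only [if_neg h0, if_neg h2, if_neg hm2, add_zero]
        have hA : y ^ 2 - 4 ≠ 0 := by
          have hfac : y ^ 2 - 4 = (y - 2) * (y + 2) := by ring
          rw [hfac]
          exact mul_ne_zero (sub_ne_zero.mpr h2)
            (fun h => hm2 (by linear_combination h))
        have hc : -(4 * y ^ 2) ≠ 0 := by
          refine neg_ne_zero.mpr (mul_ne_zero (four_ne_zero hp) (pow_ne_zero _ h0))
        have hsum : ∑ x : ZMod p, χ ((y ^ 2 - 4) * x ^ 2 - 4 * y ^ 2)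
            = ∑ x : ZMod p, χ ((y ^ 2 - 4) * x ^ 2 + -(4 * y ^ 2)) := by
          refine Finset.sum_congr rfl fun x _ => ?_
          congr 1; ring
        rw [hsum, sum_chi_quad hp hA hc]

lemma sum_G (hp : p ≠ 2) :
    ∑ y : ZMod p, ∑ x : ZMod p, χ ((y ^ 2 - 4) * x ^ 2 - 4 * y ^ 2)
      = 3 * χ (-1) * p + 1 := by
  classical
  have h := Finset.sum_congr rfl fun y (_ : y ∈ (univ : Finset (ZMod p))) => G_eval hp y
  rw [h, Finset.sum_add_distrib, Finset.sum_add_distrib, Finset.sum_add_distrib]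
  have hchi : ∑ y : ZMod p, χ (y ^ 2 - 4) = -1 := by
    have hc : (-4 : ZMod p) ≠ 0 := neg_ne_zero.mpr (four_ne_zero hp)
    have hrw : ∑ y : ZMod p, χ (y ^ 2 - 4) = ∑ y : ZMod p, χ (y ^ 2 + (-4)) := by
      refine Finset.sum_congr rfl fun y _ => ?_
      congr 1; ring
    rw [hrw, sum_chi_sq_add hp hc]
  have hsumneg : ∑ y : ZMod p, - χ (y ^ 2 - 4) = 1 := by
    rw [Finset.sum_neg_distrib, hchi]; norm_num
  rw [hsumneg]
  simp only [Finset.sum_ite_eq', mem_univ, if_pos]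
  ring


lemma card_sol (hp : p ≠ 2) :
    (((univ : Finset (ZMod p × ZMod p × ZMod p)).filter
        (fun v => v.1 ^ 2 + v.2.1 ^ 2 + v.2.2 ^ 2 = v.1 * v.2.1 * v.2.2)).card : ℤ)
      = (p : ℤ) ^ 2 + 3 * χ (-1) * p + 1 := by
  classical
  have key : ∀ x y z : ZMod p,
      (x ^ 2 + y ^ 2 + z ^ 2 = x * y * z)
        ↔ ((2 * z - x * y) ^ 2 = x ^ 2 * y ^ 2 - 4 * x ^ 2 - 4 * y ^ 2) := by
    intro x y z
    constructor
    · intro h; linear_combination 4 * h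
    · intro h
      refine mul_left_cancel₀ (four_ne_zero hp) ?_
      linear_combination h
  have h2 : (2 : ZMod p) ≠ 0 := two_ne_zero' hp
  have inner : ∀ x y : ZMod p,
      (∑ z : ZMod p, (if x ^ 2 + y ^ 2 + z ^ 2 = x * y * z then (1 : ℤ) else 0))
        = χ (x ^ 2 * y ^ 2 - 4 * x ^ 2 - 4 * y ^ 2) + 1 := by
    intro x y
    rw [Finset.sum_boole, ← card_sqrts hp (x ^ 2 * y ^ 2 - 4 * x ^ 2 - 4 * y ^ 2)]
    congr 1
    refine Finset.card_nbij' (fun z => 2 * z - x * y) (fun w => (w + x * y) * 2⁻¹)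
      ?_ ?_ ?_ ?_
    · intro z hz
      rw [Finset.mem_coe, Finset.mem_filter] at hz ⊢
      exact ⟨mem_univ _, (key x y z).mp hz.2⟩
    · intro w hw
      rw [Finset.mem_coe, Finset.mem_filter] at hw ⊢
      refine ⟨mem_univ _, ?_⟩
      rw [key]
      have hcl : 2 * ((w + x * y) * 2⁻¹) = w + x * y := by
        field_simp
      rw [hcl]
      have : w + x * y - x * y = w := by ring
      rw [this]
      exact hw.2
    · intro z _
      field_simp
      ring
    · intro w _
      field_simp
      ring
  have hcard : (((univ : Finset (ZMod p × ZMod p × ZMod p)).filter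
        (fun v => v.1 ^ 2 + v.2.1 ^ 2 + v.2.2 ^ 2 = v.1 * v.2.1 * v.2.2)).card : ℤ)
      = ∑ v : ZMod p × ZMod p × ZMod p,
          (if v.1 ^ 2 + v.2.1 ^ 2 + v.2.2 ^ 2 = v.1 * v.2.1 * v.2.2 then (1 : ℤ) else 0) := by
    rw [Finset.sum_boole]
  rw [hcard, Fintype.sum_prod_type]
  have hstep : ∀ x : ZMod p,
      (∑ yz : ZMod p × ZMod p,
        (if x ^ 2 + yz.1 ^ 2 + yz.2 ^ 2 = x * yz.1 * yz.2 then (1 : ℤ) else 0))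
      = ∑ y : ZMod p, (χ (x ^ 2 * y ^ 2 - 4 * x ^ 2 - 4 * y ^ 2) + 1) := by
    intro x
    rw [Fintype.sum_prod_type]
    exact Finset.sum_congr rfl fun y _ => inner x y
  rw [Finset.sum_congr rfl fun x _ => hstep x]
  have hsplit : ∑ x : ZMod p, ∑ y : ZMod p,
      (χ (x ^ 2 * y ^ 2 - 4 * x ^ 2 - 4 * y ^ 2) + 1)
      = (∑ x : ZMod p, ∑ y : ZMod p, χ (x ^ 2 * y ^ 2 - 4 * x ^ 2 - 4 * y ^ 2))
        + (p : ℤ) ^ 2 := by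
    have hrow : ∀ x : ZMod p, ∑ y : ZMod p,
        (χ (x ^ 2 * y ^ 2 - 4 * x ^ 2 - 4 * y ^ 2) + 1)
        = (∑ y : ZMod p, χ (x ^ 2 * y ^ 2 - 4 * x ^ 2 - 4 * y ^ 2)) + (p : ℤ) := by
      intro x
      rw [Finset.sum_add_distrib]
      simp [Finset.card_univ, ZMod.card]
    rw [Finset.sum_congr rfl fun x _ => hrow x, Finset.sum_add_distrib,
      Finset.sum_const, Finset.card_univ, ZMod.card, nsmul_eq_mul]
    ring
  rw [hsplit]
  have hS : ∑ x : ZMod p, ∑ y : ZMod p, χ (x ^ 2 * y ^ 2 - 4 * x ^ 2 - 4 * y ^ 2)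
      = 3 * χ (-1) * p + 1 := by
    rw [Finset.sum_comm]
    have := sum_G hp
    rw [← this]
    refine Finset.sum_congr rfl fun y _ => Finset.sum_congr rfl fun x _ => ?_
    congr 1
    ring
  rw [hS]
  ring

end MarkoffAux


/-- For an odd prime `p`, the punctured Markoff surface
`X*_{-2}(F_p)` has `p(p+3)` points if `p ≡ 1 (mod 4)` and `p(p−3)` points if
`p ≡ 3 (mod 4)`. -/
theorem card_markoff_star (p : ℕ) [Fact p.Prime] (hp : p ≠ 2) :
    Nat.card {v : ZMod p × ZMod p × ZMod p //
        v.1 ^ 2 + v.2.1 ^ 2 + v.2.2 ^ 2 = v.1 * v.2.1 * v.2.2 ∧ v ≠ (0, 0, 0)} =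
      if p % 4 = 1 then p * (p + 3) else p * (p - 3) := by
  classical
  have hp3 : 3 ≤ p := by
    have h1 := (Fact.out : p.Prime).two_le
    omega
  rw [Nat.card_eq_fintype_card, Fintype.card_subtype]
  have hfe : (Finset.univ : Finset (ZMod p × ZMod p × ZMod p)).filter
        (fun v => v.1 ^ 2 + v.2.1 ^ 2 + v.2.2 ^ 2 = v.1 * v.2.1 * v.2.2 ∧ v ≠ (0, 0, 0))
      = ((Finset.univ : Finset (ZMod p × ZMod p × ZMod p)).filter
          (fun v => v.1 ^ 2 + v.2.1 ^ 2 + v.2.2 ^ 2 = v.1 * v.2.1 * v.2.2)).erase (0, 0, 0) := by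
    ext v
    simp only [Finset.mem_filter, Finset.mem_erase, Finset.mem_univ, true_and]
    tauto
  have hmem : ((0, 0, 0) : ZMod p × ZMod p × ZMod p) ∈
      (Finset.univ : Finset (ZMod p × ZMod p × ZMod p)).filter
        (fun v => v.1 ^ 2 + v.2.1 ^ 2 + v.2.2 ^ 2 = v.1 * v.2.1 * v.2.2) := by
    simp
  rw [hfe, Finset.card_erase_of_mem hmem]
  have hodd : p % 2 = 1 := Nat.odd_iff.mp ((Fact.out : p.Prime).odd_of_ne_two hp)
  have hε : quadraticChar (ZMod p) (-1) = if p % 4 = 1 then 1 else -1 := by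
    rw [quadraticChar_neg_one (MarkoffAux.ringChar_ne_two hp), ZMod.card,
      ZMod.χ₄_nat_eq_if_mod_four, hodd]
    norm_num
  have hcards := MarkoffAux.card_sol (p := p) hp
  set N : ℕ := ((Finset.univ : Finset (ZMod p × ZMod p × ZMod p)).filter
      (fun v => v.1 ^ 2 + v.2.1 ^ 2 + v.2.2 ^ 2 = v.1 * v.2.1 * v.2.2)).card with hN
  by_cases h14 : p % 4 = 1
  · rw [if_pos h14]
    rw [hε, if_pos h14] at hcards
    have hNval : N = p * (p + 3) + 1 := by
      have : (N : ℤ) = ((p * (p + 3) + 1 : ℕ) : ℤ) := by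
        rw [hcards]; push_cast; ring
      exact_mod_cast this
    omega
  · rw [if_neg h14]
    rw [hε, if_neg h14] at hcards
    have hNval : N = p * (p - 3) + 1 := by
      have : (N : ℤ) = ((p * (p - 3) + 1 : ℕ) : ℤ) := by
        rw [hcards]
        push_cast [Nat.cast_sub hp3]
        ring
      exact_mod_cast this
    omega
end

section
/- Let p be an odd prime, and let Y_{-2}(F_p) denote the set of orbits of the Klein four-group N of even sign changes acting on X*_{-2}(F_p). Then the cardinality of Y_{-2}(F_p) equals p(p+3)/4 if p ≡ 1 (mod 4), and equals p(p−3)/4 if p ≡ 3 (mod 4). -/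
open Finset

namespace MKF

variable {p : ℕ} [Fact p.Prime] (hp : p ≠ 2)

local notation "χ" => quadraticChar (ZMod p)

lemma mkf_rc_ne_two (hp : p ≠ 2) : ringChar (ZMod p) ≠ 2 := by
  rw [ZMod.ringChar_zmod_n]; exact hp

lemma mkf_sum_chi_mul_shift (hp : p ≠ 2) (c : ZMod p) (hc : c ≠ 0) :
    ∑ t : ZMod p, χ t * χ (t + c) = -1 := by
  have hj : ∑ x : ZMod p, χ x * χ (1 - x) = -χ (-1) := by
    have := jacobiSum_nontrivial_inv (quadraticChar_ne_one (mkf_rc_ne_two hp))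
    rwa [(quadraticChar_isQuadratic (ZMod p)).inv, jacobiSum] at this
  have hre : ∑ t : ZMod p, χ t * χ (t + c) =
      ∑ x : ZMod p, χ (-c * x) * χ (-c * x + c) := by
    exact (Fintype.sum_equiv (Equiv.mulLeft₀ (-c) (neg_ne_zero.mpr hc)) _ _ (fun x => rfl)).symm
  rw [hre]
  have key : ∀ x : ZMod p, χ (-c * x) * χ (-c * x + c) = χ (-1) * (χ x * χ (1 - x)) := by
    intro x
    have h1 : -c * x + c = c * (1 - x) := by ring
    have h2 : -c * x = -1 * (c * x) := by ring
    rw [h1, h2, map_mul, map_mul, map_mul]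
    have hc2 : χ c * χ c = 1 := by
      have := quadraticChar_sq_one (F := ZMod p) hc
      rwa [pow_two] at this
    linear_combination (χ (-1) * χ x * χ (1 - x)) * hc2
  simp_rw [key]
  rw [← Finset.mul_sum, hj]
  have : χ (-1) * χ (-1) = 1 := by
    have := quadraticChar_sq_one (F := ZMod p) (a := (-1 : ZMod p)) (by
      intro h; exact one_ne_zero (neg_eq_zero.mp h))
    rwa [pow_two] at this
  linear_combination -this

lemma mkf_card_sqrts (hp : p ≠ 2) (a : ZMod p) :
    ((univ.filter fun x : ZMod p => x ^ 2 = a).card : ℤ) = χ a + 1 := by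
  have := quadraticChar_card_sqrts (mkf_rc_ne_two hp) a
  rw [← this]
  norm_cast
  congr 1
  rw [Set.toFinset_setOf]

lemma mkf_chi_neg_one_sq (hp : p ≠ 2) : χ (-1) * χ (-1) = 1 := by
  have := quadraticChar_sq_one (F := ZMod p) (a := (-1 : ZMod p)) (by
    intro h; exact one_ne_zero (neg_eq_zero.mp h))
  rwa [pow_two] at this

lemma mkf_sum_chi_sq_add (hp : p ≠ 2) (c : ZMod p) (hc : c ≠ 0) :
    ∑ z : ZMod p, χ (z ^ 2 + c) = -1 := by
  have hfib : ∑ z : ZMod p, χ (z ^ 2 + c) =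
      ∑ t : ZMod p, ∑ z ∈ univ.filter (fun z : ZMod p => z ^ 2 = t), χ (z ^ 2 + c) := by
    exact (Finset.sum_fiberwise univ (fun z => z ^ 2) (fun z => χ (z ^ 2 + c))).symm
  rw [hfib]
  have hinner : ∀ t : ZMod p,
      ∑ z ∈ univ.filter (fun z : ZMod p => z ^ 2 = t), χ (z ^ 2 + c) = (χ t + 1) * χ (t + c) := by
    intro t
    rw [Finset.sum_congr rfl (fun z hz => by
      rw [(Finset.mem_filter.mp hz).2]), Finset.sum_const, nsmul_eq_mul]
    rw [← mkf_card_sqrts hp]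
  simp_rw [hinner, add_mul, one_mul]
  rw [Finset.sum_add_distrib]
  have h2 : ∑ t : ZMod p, χ (t + c) = 0 := by
    rw [show (∑ t : ZMod p, χ (t + c)) = ∑ t : ZMod p, χ t from
      Fintype.sum_equiv (Equiv.addRight c) _ _ (fun t => rfl)]
    exact quadraticChar_sum_zero (mkf_rc_ne_two hp)
  rw [mkf_sum_chi_mul_shift hp c hc, h2, add_zero]

lemma mkf_sum_chi_quadratic (hp : p ≠ 2) (a b : ZMod p) (ha : a ≠ 0) (hb : b ≠ 0) :
    ∑ z : ZMod p, χ (a * z ^ 2 + b) = -χ a := by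
  have key : ∀ z : ZMod p, χ (a * z ^ 2 + b) = χ a * χ (z ^ 2 + b / a) := by
    intro z
    rw [← map_mul]
    rw [mul_add, mul_div_cancel₀ _ ha, mul_comm]
  simp_rw [key]
  rw [← Finset.mul_sum, mkf_sum_chi_sq_add hp _ (div_ne_zero hb ha), mul_neg_one]

lemma mkf_sum_chi_sq_mul (hp : p ≠ 2) (a : ZMod p) (ha : a ≠ 0) :
    ∑ z : ZMod p, χ (a * z ^ 2) = (p - 1) * χ a := by
  have key : ∀ z : ZMod p, χ (a * z ^ 2) = χ a * (χ z * χ z) := by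
    intro z
    rw [← map_mul]
    rw [show a * z ^ 2 = a * (z * z) by ring, map_mul]
  simp_rw [key]
  rw [← Finset.mul_sum]
  have : ∑ z : ZMod p, χ z * χ z = (p - 1 : ℤ) := by
    have : ∀ z : ZMod p, χ z * χ z = if z = 0 then 0 else 1 := by
      intro z
      by_cases hz : z = 0
      · simp [hz]
      · simp only [hz, if_false]
        have := quadraticChar_sq_one (F := ZMod p) hz
        rwa [pow_two] at this
    simp_rw [this]
    have h2 : (∑ x : ZMod p, if x = 0 then (0:ℤ) else 1)
        = ∑ x : ZMod p, ((1:ℤ) - if x = 0 then (1:ℤ) else 0) := by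
      apply Finset.sum_congr rfl
      intro x _
      by_cases h : x = 0 <;> simp [h]
    rw [h2, Finset.sum_sub_distrib, Finset.sum_ite_eq' univ (0 : ZMod p) (fun _ => (1:ℤ))]
    simp [Finset.card_univ, ZMod.card]
  rw [this]; ring

lemma mkf_two_ne_zero (hp : p ≠ 2) : (2 : ZMod p) ≠ 0 := by
  have : ((2 : ℕ) : ZMod p) ≠ 0 := by
    rw [Ne, ZMod.natCast_eq_zero_iff]
    intro h
    exact hp ((Nat.prime_dvd_prime_iff_eq Fact.out Nat.prime_two).mp h)
  simpa using this

lemma mkf_four_ne_zero (hp : p ≠ 2) : (4 : ZMod p) ≠ 0 := by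
  have h2 := mkf_two_ne_zero hp
  intro h
  exact h2 (by
    have : (4 : ZMod p) = 2 * 2 := by norm_num
    rw [this] at h
    exact mul_self_eq_zero.mp h)

lemma mkf_chi_four (hp : p ≠ 2) : χ (4 : ZMod p) = 1 := by
  have : (4 : ZMod p) = 2 ^ 2 := by norm_num
  rw [this]
  exact quadraticChar_sq_one' (mkf_two_ne_zero hp)

lemma mkf_chi_neg_sixteen (hp : p ≠ 2) : χ (-16 : ZMod p) = χ (-1 : ZMod p) := by
  have : (-16 : ZMod p) = -1 * 4 ^ 2 := by norm_num
  rw [this, map_mul]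
  rw [quadraticChar_sq_one' (mkf_four_ne_zero hp), mul_one]

lemma mkf_inner_sum (hp : p ≠ 2) (y : ZMod p) :
    ∑ z : ZMod p, χ ((y ^ 2 - 4) * z ^ 2 - 4 * y ^ 2) =
      if y = 2 ∨ y = -2 then (p : ℤ) * χ (-1)
      else if y = 0 then ((p : ℤ) - 1) * χ (-1)
      else -χ (y ^ 2 - 4) := by
  by_cases h24 : y = 2 ∨ y = -2
  · have hy2 : y ^ 2 = 4 := by rcases h24 with h | h <;> rw [h] <;> ring
    simp only [h24, if_true]
    have : ∀ z : ZMod p, (y ^ 2 - 4) * z ^ 2 - 4 * y ^ 2 = -16 := by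
      intro z; rw [hy2]; ring
    simp_rw [this, Finset.sum_const, Finset.card_univ, ZMod.card, nsmul_eq_mul,
      mkf_chi_neg_sixteen hp]
  · simp only [h24, if_false]
    push_neg at h24
    have hy2 : y ^ 2 - 4 ≠ 0 := by
      intro h
      have : (y - 2) * (y + 2) = 0 := by linear_combination h
      rcases mul_eq_zero.mp this with h' | h'
      · exact h24.1 (by linear_combination h')
      · exact h24.2 (by linear_combination h')
    by_cases hy0 : y = 0
    · simp only [hy0, if_true]
      have h4 : (-4 : ZMod p) ≠ 0 := fun h => mkf_four_ne_zero hp (neg_eq_zero.mp h)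
      have key : ∀ z : ZMod p, ((0:ZMod p) ^ 2 - 4) * z ^ 2 - 4 * (0:ZMod p) ^ 2
          = -4 * z ^ 2 := fun z => by ring
      simp_rw [key]
      rw [mkf_sum_chi_sq_mul hp (-4) h4]
      congr 1
      rw [show (-4 : ZMod p) = -1 * 2 ^ 2 by norm_num, map_mul,
        quadraticChar_sq_one' (mkf_two_ne_zero hp), mul_one]
    · simp only [hy0, if_false]
      have hb : -(4 : ZMod p) * y ^ 2 ≠ 0 := by
        intro h
        rcases mul_eq_zero.mp h with h' | h'
        · exact mkf_four_ne_zero hp (neg_eq_zero.mp h')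
        · exact hy0 (pow_eq_zero_iff (by norm_num) |>.mp h')
      have key : ∀ z : ZMod p, (y ^ 2 - 4) * z ^ 2 - 4 * y ^ 2
          = (y ^ 2 - 4) * z ^ 2 + -4 * y ^ 2 := by intro z; ring
      simp_rw [key]
      exact mkf_sum_chi_quadratic hp _ _ hy2 (by simpa using hb)

lemma mkf_chi_neg_four (hp : p ≠ 2) : χ (-4 : ZMod p) = χ (-1 : ZMod p) := by
  rw [show (-4 : ZMod p) = -1 * 2 ^ 2 by norm_num, map_mul,
    quadraticChar_sq_one' (mkf_two_ne_zero hp), mul_one]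

lemma mkf_total (hp : p ≠ 2) :
    ∑ y : ZMod p, ∑ z : ZMod p, χ ((y ^ 2 - 4) * z ^ 2 - 4 * y ^ 2)
      = 3 * p * χ (-1) + 1 := by
  have h4 : (-4 : ZMod p) ≠ 0 := fun h => mkf_four_ne_zero hp (neg_eq_zero.mp h)
  have h20 : (2 : ZMod p) ≠ 0 := mkf_two_ne_zero hp
  have hm20 : (-2 : ZMod p) ≠ 0 := fun h => h20 (neg_eq_zero.mp h)
  have h2ne : (2 : ZMod p) ≠ -2 := by
    intro h; exact mkf_four_ne_zero hp (by linear_combination h)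
  simp_rw [mkf_inner_sum hp]
  rw [← Finset.sum_sdiff (Finset.subset_univ ({2, -2, 0} : Finset (ZMod p)))]
  have hnm1 : (2 : ZMod p) ∉ ({-2, 0} : Finset (ZMod p)) := by
    simp [h2ne, h20]
  have hnm2 : (-2 : ZMod p) ∉ ({0} : Finset (ZMod p)) := by simp [hm20]
  have hS : ∀ f : ZMod p → ℤ, ∑ y ∈ ({2, -2, 0} : Finset (ZMod p)), f y
      = f 2 + f (-2) + f 0 := by
    intro f
    rw [show ({2, -2, 0} : Finset (ZMod p))
        = insert 2 (insert (-2) ({0} : Finset (ZMod p))) from rfl,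
      Finset.sum_insert hnm1, Finset.sum_insert hnm2, Finset.sum_singleton]
    ring
  have hsd : ∑ y ∈ univ \ ({2, -2, 0} : Finset (ZMod p)),
      (if y = 2 ∨ y = -2 then (p : ℤ) * χ (-1)
       else if y = 0 then ((p : ℤ) - 1) * χ (-1) else -χ (y ^ 2 - 4))
      = ∑ y ∈ univ \ ({2, -2, 0} : Finset (ZMod p)), -χ (y ^ 2 - 4) := by
    apply Finset.sum_congr rfl
    intro y hy
    simp only [Finset.mem_sdiff, Finset.mem_univ, true_and, Finset.mem_insert,
      Finset.mem_singleton, not_or] at hy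
    rw [if_neg (by tauto), if_neg hy.2.2]
  rw [hsd, hS]
  have hsum2 : ∑ y ∈ univ \ ({2, -2, 0} : Finset (ZMod p)), χ (y ^ 2 - 4)
      = -1 - χ (-1) := by
    have huniv : ∑ y : ZMod p, χ (y ^ 2 - 4) = -1 := by
      have := mkf_sum_chi_sq_add hp (-4) h4
      rw [← this]
      apply Finset.sum_congr rfl
      intro y _
      ring_nf
    have hsplit := Finset.sum_sdiff (f := fun y : ZMod p => χ (y ^ 2 - 4))
      (Finset.subset_univ ({2, -2, 0} : Finset (ZMod p)))
    rw [huniv, hS] at hsplit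
    have e1 : ((2 : ZMod p) ^ 2 - 4) = 0 := by ring
    have e2 : ((-2 : ZMod p) ^ 2 - 4) = 0 := by ring
    have e3 : ((0 : ZMod p) ^ 2 - 4) = -4 := by ring
    rw [e1, e2, e3, quadraticChar_zero, mkf_chi_neg_four hp] at hsplit
    linarith
  rw [Finset.sum_neg_distrib, hsum2]
  rw [if_pos (Or.inl rfl), if_pos (Or.inr rfl),
    if_neg (by rintro (h | h); exacts [h20 h.symm, hm20 h.symm]), if_pos rfl]
  ring

lemma mkf_card_roots (hp : p ≠ 2) (b c : ZMod p) :
    ((univ.filter fun x : ZMod p => x ^ 2 + b * x + c = 0).card : ℤ)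
      = χ (b ^ 2 - 4 * c) + 1 := by
  have h2 : (2 : ZMod p) ≠ 0 := mkf_two_ne_zero hp
  have h4 : (4 : ZMod p) ≠ 0 := mkf_four_ne_zero hp
  have hcard : (univ.filter fun x : ZMod p => x ^ 2 + b * x + c = 0).card
      = (univ.filter fun u : ZMod p => u ^ 2 = b ^ 2 - 4 * c).card := by
    apply Finset.card_bij (fun x _ => 2 * x + b)
    · intro x hx
      simp only [Finset.mem_filter, Finset.mem_univ, true_and] at hx ⊢
      linear_combination 4 * hx
    · intro x hx x' hx' h
      have := add_right_cancel h
      exact mul_left_cancel₀ h2 this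
    · intro u hu
      simp only [Finset.mem_filter, Finset.mem_univ, true_and] at hu
      refine ⟨(u - b) / 2, ?_, ?_⟩
      · simp only [Finset.mem_filter, Finset.mem_univ, true_and]
        have h4' : ((u - b) / 2) ^ 2 + b * ((u - b) / 2) + c
            = (u ^ 2 - (b ^ 2 - 4 * c)) / 4 := by
          field_simp
          ring
        rw [h4', hu]
        simp
      · field_simp
        ring
  rw [hcard, mkf_card_sqrts hp]

lemma mkf_card_surface (hp : p ≠ 2) :
    ((univ.filter fun v : ZMod p × ZMod p × ZMod p =>
        v.1 ^ 2 + v.2.1 ^ 2 + v.2.2 ^ 2 = v.1 * v.2.1 * v.2.2).card : ℤ)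
      = (p : ℤ) ^ 2 + 3 * p * χ (-1) + 1 := by
  rw [Finset.card_eq_sum_card_fiberwise
    (f := fun v : ZMod p × ZMod p × ZMod p => v.2) (t := univ)
    (fun v _ => Finset.mem_univ _)]
  have hfib : ∀ w : ZMod p × ZMod p,
      ((univ.filter fun v : ZMod p × ZMod p × ZMod p =>
          v.1 ^ 2 + v.2.1 ^ 2 + v.2.2 ^ 2 = v.1 * v.2.1 * v.2.2).filter
        fun v => v.2 = w).card
      = (univ.filter fun x : ZMod p =>
          x ^ 2 + (-(w.1 * w.2)) * x + (w.1 ^ 2 + w.2 ^ 2) = 0).card := by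
    intro w
    apply Finset.card_nbij' (i := fun v => v.1) (j := fun x => (x, w))
    · intro v hv
      simp only [Finset.mem_coe, Finset.mem_filter, Finset.mem_univ, true_and] at hv ⊢
      obtain ⟨h1, h2⟩ := hv
      rw [h2] at h1
      linear_combination h1
    · intro x hx
      simp only [Finset.mem_coe, Finset.mem_filter, Finset.mem_univ, true_and] at hx
      refine Finset.mem_filter.mpr ⟨Finset.mem_filter.mpr ⟨Finset.mem_univ _, ?_⟩, rfl⟩
      simp only
      linear_combination hx
    · intro v hv
      have h := (Finset.mem_filter.mp hv).2
      change v.2 = w at h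
      rw [← h]
    · intro x hx
      rfl
  simp_rw [hfib]
  push_cast
  have hval : ∀ w : ZMod p × ZMod p,
      ((univ.filter fun x : ZMod p =>
          x ^ 2 + (-(w.1 * w.2)) * x + (w.1 ^ 2 + w.2 ^ 2) = 0).card : ℤ)
      = χ ((w.1 ^ 2 - 4) * w.2 ^ 2 - 4 * w.1 ^ 2) + 1 := by
    intro w
    rw [mkf_card_roots hp]
    congr 2
    ring
  rw [Finset.sum_congr rfl (fun w _ => hval w), Finset.sum_add_distrib]
  rw [Fintype.sum_prod_type, mkf_total hp]
  simp [Finset.card_univ, ZMod.card]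
  ring

end MKF

/-- The even sign change `n₁(x,y,z) = (x,−y,−z)`. -/
def signChange1 (p : ℕ) (v : ZMod p × ZMod p × ZMod p) : ZMod p × ZMod p × ZMod p :=
  (v.1, -v.2.1, -v.2.2)

/-- The even sign change `n₂(x,y,z) = (−x,y,−z)`. -/
def signChange2 (p : ℕ) (v : ZMod p × ZMod p × ZMod p) : ZMod p × ZMod p × ZMod p :=
  (-v.1, v.2.1, -v.2.2)

/-- The even sign change `n₃(x,y,z) = (−x,−y,z)`. -/
def signChange3 (p : ℕ) (v : ZMod p × ZMod p × ZMod p) : ZMod p × ZMod p × ZMod p :=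
  (-v.1, -v.2.1, v.2.2)

/-- The punctured Markoff surface `X*_{-2}(F_p)`. -/
abbrev MarkoffStar (p : ℕ) : Type :=
  {v : ZMod p × ZMod p × ZMod p //
    v.1 ^ 2 + v.2.1 ^ 2 + v.2.2 ^ 2 = v.1 * v.2.1 * v.2.2 ∧ v ≠ (0, 0, 0)}

/-- The relation on `X*_{-2}(F_p)` of lying in the same orbit of the Klein four-group
`N = {1, n₁, n₂, n₃}` of even sign changes. -/
def kleinRel (p : ℕ) (a b : MarkoffStar p) : Prop :=
  b.val = a.val ∨ b.val = signChange1 p a.val ∨ b.val = signChange2 p a.val ∨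
    b.val = signChange3 p a.val

/-- `Y_{-2}(F_p)`: the set of `N`-orbits on `X*_{-2}(F_p)`. -/
abbrev YMinusTwo (p : ℕ) : Type := Quot (kleinRel p)


namespace MKF2

open Finset MKF

variable {p : ℕ} [Fact p.Prime]

local notation "χ" => quadraticChar (ZMod p)

lemma card_markoff (hp : p ≠ 2) :
    (Fintype.card (MarkoffStar p) : ℤ) = (p : ℤ) ^ 2 + 3 * p * χ (-1) := by
  rw [Fintype.card_subtype]
  have he : (univ.filter fun v : ZMod p × ZMod p × ZMod p =>
      v.1 ^ 2 + v.2.1 ^ 2 + v.2.2 ^ 2 = v.1 * v.2.1 * v.2.2 ∧ v ≠ (0, 0, 0))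
      = (univ.filter fun v : ZMod p × ZMod p × ZMod p =>
        v.1 ^ 2 + v.2.1 ^ 2 + v.2.2 ^ 2 = v.1 * v.2.1 * v.2.2).erase (0, 0, 0) := by
    ext v
    simp only [Finset.mem_filter, Finset.mem_univ, true_and, Finset.mem_erase]
    tauto
  have hmem : ((0, 0, 0) : ZMod p × ZMod p × ZMod p) ∈
      univ.filter fun v : ZMod p × ZMod p × ZMod p =>
        v.1 ^ 2 + v.2.1 ^ 2 + v.2.2 ^ 2 = v.1 * v.2.1 * v.2.2 := by
    simp
  rw [he, Finset.card_erase_of_mem hmem]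
  have hle : 1 ≤ (univ.filter fun v : ZMod p × ZMod p × ZMod p =>
      v.1 ^ 2 + v.2.1 ^ 2 + v.2.2 ^ 2 = v.1 * v.2.1 * v.2.2).card :=
    Finset.card_pos.mpr ⟨_, hmem⟩
  push_cast [Nat.cast_sub hle]
  rw [mkf_card_surface hp]
  ring

lemma sc1_invol (v : ZMod p × ZMod p × ZMod p) : signChange1 p (signChange1 p v) = v := by
  simp [signChange1]

lemma sc2_invol (v : ZMod p × ZMod p × ZMod p) : signChange2 p (signChange2 p v) = v := by
  simp [signChange2]

lemma sc3_invol (v : ZMod p × ZMod p × ZMod p) : signChange3 p (signChange3 p v) = v := by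
  simp [signChange3]

lemma klein_equivalence : Equivalence (kleinRel p) := by
  constructor
  · intro a
    exact Or.inl rfl
  · intro a b h
    rcases h with h | h | h | h <;>
      unfold kleinRel <;> rw [h] <;>
      simp [signChange1, signChange2, signChange3, Prod.ext_iff] <;> tauto
  · intro a b c hab hbc
    rcases hab with h | h | h | h <;> rcases hbc with h' | h' | h' | h' <;>
      unfold kleinRel <;> rw [h', h] <;>
      simp [signChange1, signChange2, signChange3, Prod.ext_iff] <;> tauto

/-- Lift of `signChange1` to the punctured Markoff surface. -/
def k1 (a : MarkoffStar p) : MarkoffStar p :=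
  ⟨signChange1 p a.val, by
    obtain ⟨h1, h2⟩ := a.property
    constructor
    · simp only [signChange1]
      linear_combination h1
    · intro h
      apply h2
      simp only [signChange1, Prod.ext_iff, neg_eq_zero] at h ⊢
      exact h⟩

/-- Lift of `signChange2` to the punctured Markoff surface. -/
def k2 (a : MarkoffStar p) : MarkoffStar p :=
  ⟨signChange2 p a.val, by
    obtain ⟨h1, h2⟩ := a.property
    constructor
    · simp only [signChange2]
      linear_combination h1
    · intro h
      apply h2
      simp only [signChange2, Prod.ext_iff, neg_eq_zero] at h ⊢
      exact h⟩

/-- Lift of `signChange3` to the punctured Markoff surface. -/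
def k3 (a : MarkoffStar p) : MarkoffStar p :=
  ⟨signChange3 p a.val, by
    obtain ⟨h1, h2⟩ := a.property
    constructor
    · simp only [signChange3]
      linear_combination h1
    · intro h
      apply h2
      simp only [signChange3, Prod.ext_iff, neg_eq_zero] at h ⊢
      exact h⟩

lemma coordsNe (a : MarkoffStar p) :
    ¬(a.val.2.1 = 0 ∧ a.val.2.2 = 0) ∧ ¬(a.val.1 = 0 ∧ a.val.2.2 = 0) ∧
      ¬(a.val.1 = 0 ∧ a.val.2.1 = 0) := by
  obtain ⟨h1, h2⟩ := a.property
  refine ⟨?_, ?_, ?_⟩ <;> rintro ⟨e1, e2⟩ <;> apply h2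
  · have hx : a.val.1 = 0 := by
      have h : a.val.1 ^ 2 = 0 := by rw [e1, e2] at h1; linear_combination h1
      exact pow_eq_zero_iff (by norm_num) |>.mp h
    simp [Prod.ext_iff, hx, e1, e2]
  · have hy : a.val.2.1 = 0 := by
      have h : a.val.2.1 ^ 2 = 0 := by rw [e1, e2] at h1; linear_combination h1
      exact pow_eq_zero_iff (by norm_num) |>.mp h
    simp [Prod.ext_iff, hy, e1, e2]
  · have hz : a.val.2.2 = 0 := by
      have h : a.val.2.2 ^ 2 = 0 := by rw [e1, e2] at h1; linear_combination h1
      exact pow_eq_zero_iff (by norm_num) |>.mp h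
    simp [Prod.ext_iff, hz, e1, e2]

lemma eq_neg_self (hp : p ≠ 2) {c : ZMod p} (h : c = -c) : c = 0 := by
  have h2 : (2 : ZMod p) ≠ 0 := mkf_two_ne_zero hp
  have : (2 : ZMod p) * c = 0 := by linear_combination h
  exact (mul_eq_zero.mp this).resolve_left h2

lemma distinct4 (hp : p ≠ 2) (a : MarkoffStar p) :
    a ≠ k1 a ∧ a ≠ k2 a ∧ a ≠ k3 a ∧ k1 a ≠ k2 a ∧ k1 a ≠ k3 a ∧ k2 a ≠ k3 a := by
  obtain ⟨hyz, hxz, hxy⟩ := coordsNe a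
  refine ⟨?_, ?_, ?_, ?_, ?_, ?_⟩ <;> intro h <;>
    rw [Subtype.ext_iff, Prod.ext_iff, Prod.ext_iff] at h <;>
    simp only [k1, k2, k3, signChange1, signChange2, signChange3] at h
  · exact hyz ⟨eq_neg_self hp h.2.1, eq_neg_self hp h.2.2⟩
  · exact hxz ⟨eq_neg_self hp h.1, eq_neg_self hp h.2.2⟩
  · exact hxy ⟨eq_neg_self hp h.1, eq_neg_self hp h.2.1⟩
  · exact hxy ⟨eq_neg_self hp h.1, eq_neg_self hp (by linear_combination -h.2.1)⟩
  · exact hxz ⟨eq_neg_self hp h.1, eq_neg_self hp (by linear_combination -h.2.2)⟩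
  · exact hyz ⟨eq_neg_self hp h.2.1, eq_neg_self hp (by linear_combination -h.2.2)⟩

end MKF2

/-- For an odd prime `p`, the number of `N`-orbits on
`X*_{-2}(F_p)` is `p(p+3)/4` if `p ≡ 1 (mod 4)` and `p(p−3)/4` if `p ≡ 3 (mod 4)`. -/
theorem card_Y_minus_two (p : ℕ) [Fact p.Prime] (hp : p ≠ 2) :
    Nat.card (YMinusTwo p) =
      if p % 4 = 1 then p * (p + 3) / 4 else p * (p - 3) / 4 := by
  classical
  letI s : Setoid (MarkoffStar p) := ⟨kleinRel p, MKF2.klein_equivalence⟩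
  letI : Fintype (Quotient s) := Quotient.fintype s
  have hfib : ∀ q : Quotient s,
      (Finset.univ.filter fun a : MarkoffStar p => Quotient.mk s a = q).card = 4 := by
    intro q
    induction q using Quotient.inductionOn with
    | h a =>
      obtain ⟨d1, d2, d3, d4, d5, d6⟩ := MKF2.distinct4 hp a
      have hset : (Finset.univ.filter fun b : MarkoffStar p =>
          Quotient.mk s b = Quotient.mk s a)
          = {a, MKF2.k1 a, MKF2.k2 a, MKF2.k3 a} := by
        ext b
        simp only [Finset.mem_filter, Finset.mem_univ, true_and, Finset.mem_insert,
          Finset.mem_singleton]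
        rw [Quotient.eq]
        show kleinRel p b a ↔ _
        constructor
        · rintro (h | h | h | h)
          · exact Or.inl (Subtype.ext h.symm)
          · refine Or.inr (Or.inl (Subtype.ext ?_))
            rw [show (MKF2.k1 a).val = signChange1 p a.val from rfl, h, MKF2.sc1_invol]
          · refine Or.inr (Or.inr (Or.inl (Subtype.ext ?_)))
            rw [show (MKF2.k2 a).val = signChange2 p a.val from rfl, h, MKF2.sc2_invol]
          · refine Or.inr (Or.inr (Or.inr (Subtype.ext ?_)))
            rw [show (MKF2.k3 a).val = signChange3 p a.val from rfl, h, MKF2.sc3_invol]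
        · rintro (h | h | h | h)
          · exact Or.inl (by rw [h])
          · refine Or.inr (Or.inl ?_)
            rw [h, show (MKF2.k1 a).val = signChange1 p a.val from rfl, MKF2.sc1_invol]
          · refine Or.inr (Or.inr (Or.inl ?_))
            rw [h, show (MKF2.k2 a).val = signChange2 p a.val from rfl, MKF2.sc2_invol]
          · refine Or.inr (Or.inr (Or.inr ?_))
            rw [h, show (MKF2.k3 a).val = signChange3 p a.val from rfl, MKF2.sc3_invol]
      rw [hset]
      rw [Finset.card_insert_of_notMem (by simp [d1, d2, d3]),
        Finset.card_insert_of_notMem (by simp [d4, d5]),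
        Finset.card_insert_of_notMem (by simp [d6]),
        Finset.card_singleton]
  have hcount : Fintype.card (MarkoffStar p) = 4 * Fintype.card (Quotient s) := by
    rw [show Fintype.card (MarkoffStar p) = (Finset.univ : Finset (MarkoffStar p)).card
      from rfl]
    rw [Finset.card_eq_sum_card_fiberwise
      (f := fun a : MarkoffStar p => Quotient.mk s a) (t := Finset.univ)
      (fun _ _ => Finset.mem_univ _)]
    rw [Finset.sum_congr rfl (fun q _ => hfib q), Finset.sum_const, Finset.card_univ,
      smul_eq_mul, mul_comm]
  have hy : Nat.card (YMinusTwo p) = Fintype.card (Quotient s) :=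
    Nat.card_eq_fintype_card (α := Quotient s)
  have htot : 4 * (Fintype.card (Quotient s) : ℤ) =
      (p : ℤ) ^ 2 + 3 * p * quadraticChar (ZMod p) (-1) := by
    rw [← MKF2.card_markoff hp, hcount]
    push_cast
    ring
  have hchi : quadraticChar (ZMod p) (-1) = ZMod.χ₄ (p : ZMod 4) := by
    rw [quadraticChar_neg_one (MKF.mkf_rc_ne_two hp), ZMod.card]
  have hodd : p % 2 = 1 := Nat.odd_iff.mp ((Fact.out : p.Prime).odd_of_ne_two hp)
  have hp3 : 3 ≤ p := by
    have := (Fact.out : p.Prime).two_le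
    omega
  by_cases h1 : p % 4 = 1
  · rw [if_pos h1, hy]
    have hx : quadraticChar (ZMod p) (-1) = 1 := by rw [hchi]; exact ZMod.χ₄_nat_one_mod_four h1
    rw [hx] at htot
    have hn : ((4 * Fintype.card (Quotient s) : ℕ) : ℤ) = ((p * (p + 3) : ℕ) : ℤ) := by
      push_cast
      linarith [htot]
    have hn' := Nat.cast_injective hn
    omega
  · rw [if_neg h1, hy]
    have h3 : p % 4 = 3 := by omega
    have hx : quadraticChar (ZMod p) (-1) = -1 := by
      rw [hchi]; exact ZMod.χ₄_nat_three_mod_four h3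
    rw [hx] at htot
    have hn : ((4 * Fintype.card (Quotient s) : ℕ) : ℤ) = ((p * (p - 3) : ℕ) : ℤ) := by
      push_cast [Nat.cast_sub hp3]
      linarith [htot]
    have hn' := Nat.cast_injective hn
    omega
end

section
/- Let p be an odd prime. The number of triples (x,y,z) ∈ F_p³ with (x,y,z) ≠ (0,0,0), x² + y² + z² = x·y·z, and y·z − x = x (i.e. the fixed points of the Markoff move m₁ in X*_{-2}(F_p)) equals p − 5 if p ≡ 1 (mod 4), and equals p − 3 if p ≡ 3 (mod 4). -/
private lemma markoff_sq_cases {F : Type*} [Field F] {t a : F} (h : t ^ 2 = a ^ 2) :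
    t = a ∨ t = -a := by
  have h0 : (t - a) * (t + a) = 0 := by linear_combination h
  rcases mul_eq_zero.mp h0 with h' | h'
  · left; linear_combination h'
  · right; linear_combination h'

private lemma markoff_fwd {F : Type*} [Field F] (t : F) (ht0 : t ≠ 0) (ht1 : t ^ 2 ≠ 1)
    (hti : t ^ 2 ≠ -1) :
    (((1+t^2)^2/(t*(1-t^2)))^2 + (2*(1+t^2)/(1-t^2))^2 + ((1+t^2)/t)^2
      = ((1+t^2)^2/(t*(1-t^2))) * (2*(1+t^2)/(1-t^2)) * ((1+t^2)/t)) ∧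
    ((1+t^2)/t ≠ 0) ∧
    ((2*(1+t^2)/(1-t^2)) * ((1+t^2)/t) - ((1+t^2)^2/(t*(1-t^2))) = ((1+t^2)^2/(t*(1-t^2)))) := by
  have h1 : (1 : F) - t^2 ≠ 0 := by intro h; apply ht1; linear_combination -h
  have h3 : (1 : F) + t^2 ≠ 0 := by intro h; apply hti; linear_combination h
  refine ⟨by field_simp; ring, ?_, by field_simp; ring⟩
  exact div_ne_zero h3 ht0

private lemma markoff_bwd {F : Type*} [Field F] (h2 : (2 : F) ≠ 0) (x y z : F)
    (hM : x ^ 2 + y ^ 2 + z ^ 2 = x * y * z)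
    (hfix : y * z - x = x)
    (hne : ¬ (x = 0 ∧ y = 0 ∧ z = 0)) :
    2*y/(z*(y+2)) ≠ 0 ∧ (2*y/(z*(y+2)))^2 ≠ 1 ∧ (2*y/(z*(y+2)))^2 ≠ -1 ∧
      x = (1+(2*y/(z*(y+2)))^2)^2/((2*y/(z*(y+2)))*(1-(2*y/(z*(y+2)))^2)) ∧
      y = 2*(1+(2*y/(z*(y+2)))^2)/(1-(2*y/(z*(y+2)))^2) ∧
      z = (1+(2*y/(z*(y+2)))^2)/(2*y/(z*(y+2))) := by
  have hyz : y * z = 2 * x := by linear_combination hfix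
  have hcirc : y ^ 2 + z ^ 2 = x ^ 2 := by linear_combination hM + x * hyz
  have hx : x ≠ 0 := by
    intro hx0
    apply hne
    rcases mul_eq_zero.mp (show y * z = 0 by rw [hyz, hx0]; ring) with h | h
    · have hz2 : z ^ 2 = 0 := by linear_combination hcirc + x * hx0 - y * h
      exact ⟨hx0, h, pow_eq_zero_iff (by norm_num) |>.mp hz2⟩
    · have hy2 : y ^ 2 = 0 := by linear_combination hcirc + x * hx0 - z * h
      exact ⟨hx0, pow_eq_zero_iff (by norm_num) |>.mp hy2, h⟩
  have hy : y ≠ 0 := by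
    intro h; apply hx; have h0 : 2 * x = 0 := by rw [← hyz, h]; ring
    rcases mul_eq_zero.mp h0 with h' | h'; exact absurd h' h2; exact h'
  have hz : z ≠ 0 := by
    intro h; apply hx; have h0 : 2 * x = 0 := by rw [← hyz, h]; ring
    rcases mul_eq_zero.mp h0 with h' | h'; exact absurd h' h2; exact h'
  have hkey : z ^ 2 * (y ^ 2 - 4) = 4 * y ^ 2 := by
    linear_combination (y * z + 2 * x) * hyz - 4 * hcirc
  have hy2 : y + 2 ≠ 0 := by
    intro hA
    have h16 : (16 : F) = 0 := by
      linear_combination (z ^ 2 * (y - 2) - 4 * (y - 2)) * hA - hkey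
    have h24 : (2 : F) ^ 4 ≠ 0 := pow_ne_zero 4 h2
    apply h24; rw [show (2:F)^4 = 16 by norm_num, h16]
  have hde : z * (y + 2) ≠ 0 := mul_ne_zero hz hy2
  set t := 2 * y / (z * (y + 2)) with htdef
  have ht0 : t ≠ 0 := div_ne_zero (mul_ne_zero h2 hy) hde
  have hteq : t * (z * (y + 2)) = 2 * y := div_mul_cancel₀ _ hde
  have ht2 : t ^ 2 * (y + 2) = y - 2 := by
    have h1 : (t * (z * (y + 2))) ^ 2 = (2 * y) ^ 2 := by rw [hteq]
    have hsq : t ^ 2 * (z ^ 2 * (y + 2) ^ 2) = 4 * y ^ 2 := by linear_combination h1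
    have hcan : (t ^ 2 * (y + 2) - (y - 2)) * (z ^ 2 * (y + 2)) = 0 := by
      linear_combination hsq - hkey
    rcases mul_eq_zero.mp hcan with h | h
    · linear_combination h
    · exact absurd h (mul_ne_zero (pow_ne_zero 2 hz) hy2)
  have ht1 : t ^ 2 ≠ 1 := by
    intro h
    have h4 : (4 : F) = 0 := by linear_combination ht2 - (y + 2) * h
    exact (show (4:F) ≠ 0 by
      intro hh; apply h2
      exact mul_self_eq_zero.mp (by linear_combination hh : (2:F)*(2:F) = 0)) h4
  have hti : t ^ 2 ≠ -1 := by
    intro h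
    have h2y : 2 * y = 0 := by linear_combination (y + 2) * h - ht2
    rcases mul_eq_zero.mp h2y with h' | h'; exact h2 h'; exact hy h'
  have hplus : (1 + t ^ 2) * (y + 2) = 2 * y := by linear_combination ht2
  have hminus : (1 - t ^ 2) * (y + 2) = 4 := by linear_combination -ht2
  have hzc : z = (1 + t ^ 2) / t := by
    rw [eq_div_iff ht0]
    have hcan : (z * t - (1 + t ^ 2)) * (y + 2) = 0 := by
      linear_combination hteq - hplus
    rcases mul_eq_zero.mp hcan with h | h
    · linear_combination h
    · exact absurd h hy2
  have ht1' : 1 - t ^ 2 ≠ 0 := by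
    intro h; apply ht1; linear_combination -h
  have hyc : y = 2 * (1 + t ^ 2) / (1 - t ^ 2) := by
    rw [eq_div_iff ht1']
    have hcan : (y * (1 - t ^ 2) - 2 * (1 + t ^ 2)) * (y + 2) = 0 := by
      linear_combination y * hminus - 2 * hplus
    rcases mul_eq_zero.mp hcan with h | h
    · linear_combination h
    · exact absurd h hy2
  have hxc : x = (1 + t ^ 2) ^ 2 / (t * (1 - t ^ 2)) := by
    have hx2 : x = y * z / 2 := by field_simp; linear_combination -hyz
    rw [hx2, hyc, hzc]
    field_simp
  exact ⟨ht0, ht1, hti, hxc, hyc, hzc⟩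

private lemma markoff_countT (p : ℕ) [Fact p.Prime] (hp : p ≠ 2) :
    Nat.card {t : ZMod p // t ≠ 0 ∧ t ^ 2 ≠ 1 ∧ t ^ 2 ≠ -1} =
      if p % 4 = 1 then p - 5 else p - 3 := by
  classical
  have hprime : p.Prime := Fact.out
  have h2 : (2 : ZMod p) ≠ 0 := by
    intro h
    have hd : p ∣ 2 := (ZMod.natCast_eq_zero_iff 2 p).mp (by exact_mod_cast h)
    exact hp ((Nat.prime_dvd_prime_iff_eq hprime Nat.prime_two).mp hd)
  have hodd : p % 2 = 1 := Nat.odd_iff.mp (hprime.odd_of_ne_two hp)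
  have h10 : (1 : ZMod p) ≠ 0 := one_ne_zero
  have hm10 : (-1 : ZMod p) ≠ 0 := neg_ne_zero.mpr one_ne_zero
  have hm11 : (-1 : ZMod p) ≠ 1 := by
    intro h; apply h2; linear_combination -h
  rw [Nat.card_eq_fintype_card, Fintype.card_subtype]
  have hsplit := Finset.card_filter_add_card_filter_not
    (s := (Finset.univ : Finset (ZMod p)))
    (p := fun t => t = 0 ∨ t ^ 2 = 1 ∨ t ^ 2 = -1)
  rw [Finset.card_univ, ZMod.card] at hsplit
  have hfeq : (Finset.univ.filter fun t : ZMod p => t ≠ 0 ∧ t ^ 2 ≠ 1 ∧ t ^ 2 ≠ -1)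
      = Finset.univ.filter (fun t : ZMod p => ¬(t = 0 ∨ t ^ 2 = 1 ∨ t ^ 2 = -1)) := by
    apply Finset.filter_congr
    intro t _
    simp [not_or]
  rw [hfeq]
  by_cases hm : p % 4 = 1
  · simp only [if_pos hm]
    obtain ⟨r, hr⟩ : IsSquare (-1 : ZMod p) :=
      ZMod.exists_sq_eq_neg_one_iff.mpr (by omega)
    have hr2 : (-1 : ZMod p) = r ^ 2 := by rw [hr]; ring
    have hr0 : r ≠ 0 := by
      intro h; apply h10; linear_combination -hr2 - r * h
    have hr1 : r ≠ 1 := by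
      intro h; apply h2; linear_combination -hr2 - (r + 1) * h
    have hrm1 : r ≠ -1 := by
      intro h; apply h2; linear_combination -hr2 - (r - 1) * h
    have hnr0 : -r ≠ 0 := neg_ne_zero.mpr hr0
    have hnr1 : -r ≠ 1 := by intro h; apply hrm1; linear_combination -h
    have hnrm1 : -r ≠ -1 := by intro h; apply hr1; linear_combination -h
    have hnrr : r ≠ -r := by
      intro h
      have : (2 : ZMod p) * r = 0 := by linear_combination h
      rcases mul_eq_zero.mp this with h' | h'
      · exact h2 h'
      · exact hr0 h'
    have hB : (Finset.univ.filter fun t : ZMod p => t = 0 ∨ t ^ 2 = 1 ∨ t ^ 2 = -1)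
        = ({0, 1, -1, r, -r} : Finset (ZMod p)) := by
      ext t
      simp only [Finset.mem_filter, Finset.mem_univ, true_and, Finset.mem_insert,
        Finset.mem_singleton]
      constructor
      · rintro (h | h | h)
        · tauto
        · rcases markoff_sq_cases (by rw [h]; ring : t ^ 2 = (1 : ZMod p) ^ 2) with h' | h' <;>
            tauto
        · rcases markoff_sq_cases (by rw [h, hr2] : t ^ 2 = r ^ 2) with h' | h' <;> tauto
      · rintro (rfl | rfl | rfl | rfl | rfl)
        · tauto
        · right; left; ring
        · right; left; ring
        · right; right; rw [hr2]
        · right; right; rw [hr2]; ring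
    rw [hB] at hsplit
    have hcard5 : ({0, 1, -1, r, -r} : Finset (ZMod p)).card = 5 := by
      rw [Finset.card_insert_of_notMem (by simp [h10.symm, hm10.symm, hr0.symm, hnr0.symm]),
        Finset.card_insert_of_notMem (by simp [hm11.symm, hr1.symm, hnr1.symm]),
        Finset.card_insert_of_notMem (by simp [hrm1.symm, hnrm1.symm]),
        Finset.card_insert_of_notMem (by simp [hnrr]),
        Finset.card_singleton]
    rw [hcard5] at hsplit
    omega
  · have hm3 : p % 4 = 3 := by omega
    simp only [if_neg hm]
    have hnosq : ¬ IsSquare (-1 : ZMod p) := by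
      rw [ZMod.exists_sq_eq_neg_one_iff]; omega
    have hB : (Finset.univ.filter fun t : ZMod p => t = 0 ∨ t ^ 2 = 1 ∨ t ^ 2 = -1)
        = ({0, 1, -1} : Finset (ZMod p)) := by
      ext t
      simp only [Finset.mem_filter, Finset.mem_univ, true_and, Finset.mem_insert,
        Finset.mem_singleton]
      constructor
      · rintro (h | h | h)
        · tauto
        · rcases markoff_sq_cases (by rw [h]; ring : t ^ 2 = (1 : ZMod p) ^ 2) with h' | h' <;>
            tauto
        · exact absurd ⟨t, by rw [← h]; ring⟩ hnosq
      · rintro (rfl | rfl | rfl)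
        · tauto
        · right; left; ring
        · right; left; ring
    rw [hB] at hsplit
    have hcard3 : ({0, 1, -1} : Finset (ZMod p)).card = 3 := by
      rw [Finset.card_insert_of_notMem (by simp [h10.symm, hm10.symm]),
        Finset.card_insert_of_notMem (by simp [hm11.symm]),
        Finset.card_singleton]
    rw [hcard3] at hsplit
    omega

/-- For an odd prime `p`, the number of fixed points of the Markoff
move `m₁(x,y,z) = (yz − x, y, z)` on the punctured Markoff surface `X*_{-2}(F_p)`
is `p − 5` if `p ≡ 1 (mod 4)` and `p − 3` if `p ≡ 3 (mod 4)`. -/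
theorem card_fixed_points_m1 (p : ℕ) [Fact p.Prime] (hp : p ≠ 2) :
    Nat.card {v : ZMod p × ZMod p × ZMod p //
        v.1 ^ 2 + v.2.1 ^ 2 + v.2.2 ^ 2 = v.1 * v.2.1 * v.2.2 ∧ v ≠ (0, 0, 0) ∧
        v.2.1 * v.2.2 - v.1 = v.1} =
      if p % 4 = 1 then p - 5 else p - 3 := by
  have hprime : p.Prime := Fact.out
  have h2 : (2 : ZMod p) ≠ 0 := by
    intro h
    have hd : p ∣ 2 := (ZMod.natCast_eq_zero_iff 2 p).mp (by exact_mod_cast h)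
    exact hp ((Nat.prime_dvd_prime_iff_eq hprime Nat.prime_two).mp hd)
  rw [← markoff_countT p hp]
  apply Nat.card_congr
  apply Equiv.symm
  refine Equiv.ofBijective (fun t => ⟨(((1+t.1^2)^2/(t.1*(1-t.1^2))),
      2*(1+t.1^2)/(1-t.1^2), (1+t.1^2)/t.1), ?_⟩) ⟨?_, ?_⟩
  · obtain ⟨t, ht0, ht1, hti⟩ := t
    obtain ⟨hA, hB, hC⟩ := markoff_fwd t ht0 ht1 hti
    refine ⟨hA, ?_, hC⟩
    intro h
    exact hB (congrArg (fun v => v.2.2) h)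
  · rintro ⟨a, ha0, ha1, hai⟩ ⟨b, hb0, hb1, hbi⟩ hab
    have he := Subtype.ext_iff.mp hab
    simp only [Prod.ext_iff] at he
    obtain ⟨-, hy, hz⟩ := he
    have ha1' : 1 - a ^ 2 ≠ 0 := by intro h; apply ha1; linear_combination -h
    have hb1' : 1 - b ^ 2 ≠ 0 := by intro h; apply hb1; linear_combination -h
    have hai' : 1 + a ^ 2 ≠ 0 := by intro h; apply hai; linear_combination h
    field_simp at hy hz
    have h4ab : (2 : ZMod p) * (2 * (a ^ 2 - b ^ 2)) = 0 := by linear_combination 2 * hy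
    have hab2 : a ^ 2 = b ^ 2 := by
      rcases mul_eq_zero.mp h4ab with h | h
      · exact absurd h h2
      · rcases mul_eq_zero.mp h with h' | h'
        · exact absurd h' h2
        · linear_combination h'
    have hfin : (1 + a ^ 2) * (b - a) = 0 := by linear_combination hz - a * hab2
    apply Subtype.ext
    rcases mul_eq_zero.mp hfin with h | h
    · exact absurd h hai'
    · show a = b; linear_combination -h
  · rintro ⟨⟨x, y, z⟩, hM, hne, hfix⟩
    have hne' : ¬ (x = 0 ∧ y = 0 ∧ z = 0) := by
      intro ⟨h1, h2, h3⟩; exact hne (by simp [h1, h2, h3])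
    obtain ⟨h1, h2', h3, hx, hy, hz⟩ := markoff_bwd h2 x y z hM hfix hne'
    exact ⟨⟨2*y/(z*(y+2)), h1, h2', h3⟩, Subtype.ext (by
      simp only [Prod.ext_iff]
      exact ⟨hx.symm, hy.symm, hz.symm⟩)⟩
end

section
/- Let p be a prime with p ≡ 3 (mod 8). The number of triples (x,y,z) ∈ F_p³ with (x,y,z) ≠ (0,0,0), x² + y² + z² = x·y·z, and x² = y² (i.e. x = y or x = −y; equivalently, the points of X*_{-2}(F_p) whose N-orbit is fixed by the transposition swapping the first two coordinates) equals 2(p − 3). -/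
/-- Let `p ≡ 3 (mod 8)` be prime. The number of points
`(x,y,z) ∈ X*_{-2}(F_p)` with `x² = y²` (i.e. whose `N`-orbit is fixed by the
transposition of the first two coordinates) is `2(p − 3)`. -/
theorem card_swap_fixed_orbits (p : ℕ) [Fact p.Prime] (hp : p % 8 = 3) :
    Nat.card {v : ZMod p × ZMod p × ZMod p //
        v.1 ^ 2 + v.2.1 ^ 2 + v.2.2 ^ 2 = v.1 * v.2.1 * v.2.2 ∧ v ≠ (0, 0, 0) ∧
        v.1 ^ 2 = v.2.1 ^ 2} =
      2 * (p - 3) := by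
  have hpp : p.Prime := Fact.out
  have hp' : p ≠ 2 := by omega
  have h2 : (2 : ZMod p) ≠ 0 := by
    have h : ((2 : ℕ) : ZMod p) ≠ 0 := by
      rw [Ne, ZMod.natCast_eq_zero_iff]
      intro h
      exact hp' ((Nat.prime_dvd_prime_iff_eq hpp Nat.prime_two).mp h)
    simpa using h
  obtain ⟨a, ha'⟩ := (ZMod.exists_sq_eq_neg_two_iff hp').mpr (Or.inr hp)
  have ha : a ^ 2 = -2 := by rw [sq]; exact ha'.symm
  have hn2 : (-2 : ZMod p) ≠ 0 := by
    intro h; apply h2; linear_combination -h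
  have ha0 : a ≠ 0 := by
    intro h; apply hn2; rw [← ha, h]; ring
  have hane : a ≠ -a := by
    intro h; apply ha0
    have h' : 2 * a = 0 := by linear_combination h
    rcases mul_eq_zero.mp h' with h'' | h''
    · exact absurd h'' h2
    · exact h''
  set T := {u : ZMod p // u ≠ 0 ∧ u ^ 2 ≠ -2} with hT
  have hcardT : Nat.card T = p - 3 := by
    have hset : (Finset.univ.filter fun u : ZMod p => u ≠ 0 ∧ u ^ 2 ≠ -2) =
        ({0, a, -a} : Finset (ZMod p))ᶜ := by
      ext u
      simp only [Finset.mem_filter, Finset.mem_univ, true_and, Finset.mem_compl,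
        Finset.mem_insert, Finset.mem_singleton]
      constructor
      · rintro ⟨h0, hsq⟩
        push_neg
        refine ⟨h0, ?_, ?_⟩
        · intro h; exact hsq (by rw [h]; exact ha)
        · intro h; apply hsq; rw [h, ← ha]; ring
      · intro h
        push_neg at h
        refine ⟨h.1, fun hsq => ?_⟩
        have hmul : (u - a) * (u + a) = 0 := by linear_combination hsq - ha
        rcases mul_eq_zero.mp hmul with h' | h'
        · exact h.2.1 (by linear_combination h')
        · exact h.2.2 (by linear_combination h')
    rw [Nat.card_eq_fintype_card, Fintype.card_subtype, hset, Finset.card_compl]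
    have hc3 : ({0, a, -a} : Finset (ZMod p)).card = 3 := by
      rw [Finset.card_insert_of_notMem, Finset.card_insert_of_notMem,
        Finset.card_singleton]
      · simpa using hane
      · simp only [Finset.mem_insert, Finset.mem_singleton]
        push_neg
        exact ⟨Ne.symm ha0, fun h => ha0 (by linear_combination h)⟩
    rw [hc3, ZMod.card]
  have h1n : (1 : ZMod p) ≠ -1 := by
    intro h; apply h2; linear_combination h
  set f : Bool × T → {v : ZMod p × ZMod p × ZMod p //
      v.1 ^ 2 + v.2.1 ^ 2 + v.2.2 ^ 2 = v.1 * v.2.1 * v.2.2 ∧ v ≠ (0, 0, 0) ∧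
      v.1 ^ 2 = v.2.1 ^ 2} := fun bu =>
    ⟨((if bu.1 then 1 else -1) * ((bu.2.1 ^ 2 + 2) / bu.2.1),
      (bu.2.1 ^ 2 + 2) / bu.2.1,
      (if bu.1 then 1 else -1) * (bu.2.1 ^ 2 + 2)), by
      obtain ⟨b, u, hu0, hu2⟩ := bu
      have hu2' : u ^ 2 + 2 ≠ 0 := fun h => hu2 (by linear_combination h)
      refine ⟨?_, ?_, ?_⟩
      · cases b <;> simp only [Bool.false_eq_true, if_false, if_true] <;>
          field_simp <;> ring
      · intro h
        apply div_ne_zero hu2' hu0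
        exact congrArg (fun w : ZMod p × ZMod p × ZMod p => w.2.1) h
      · cases b <;> simp only [Bool.false_eq_true, if_false, if_true] <;> ring⟩
    with hf
  have hbij : Function.Bijective f := by
    constructor
    · rintro ⟨b, u, hu0, hu2⟩ ⟨b', u', hu0', hu2'⟩ heq
      have hu2p : u ^ 2 + 2 ≠ 0 := fun h => hu2 (by linear_combination h)
      have hu2p' : u' ^ 2 + 2 ≠ 0 := fun h => hu2' (by linear_combination h)
      rw [hf, Subtype.mk.injEq, Prod.mk.injEq, Prod.mk.injEq] at heq
      obtain ⟨e1, e2, e3⟩ := heq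
      have hy' : (u' ^ 2 + 2) / u' ≠ 0 := div_ne_zero hu2p' hu0'
      rw [e2] at e1
      have hee : (if b then (1 : ZMod p) else -1) = (if b' then 1 else -1) :=
        mul_right_cancel₀ hy' e1
      have hbb : b = b' := by
        cases b <;> cases b' <;>
          simp only [Bool.false_eq_true, if_false, if_true] at hee <;>
          first
            | rfl
            | exact absurd hee h1n
            | exact absurd hee.symm h1n
      subst hbb
      have he3 : u ^ 2 + 2 = u' ^ 2 + 2 := by
        have hne : (if b then (1 : ZMod p) else -1) ≠ 0 := by
          cases b <;> simp
        exact mul_left_cancel₀ hne e3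
      have huu : u = u' := by
        field_simp at e2
        have hz : (u ^ 2 + 2) * (u' - u) = 0 := by
          linear_combination e2 - u * he3
        rcases mul_eq_zero.mp hz with h | h
        · exact absurd h hu2p
        · linear_combination -h
      subst huu
      rfl
    · rintro ⟨⟨x, y, z⟩, heq, hne, hxy⟩
      simp only at heq hxy
      have hx0 : x ≠ 0 := by
        intro h
        subst h
        have hy0 : y = 0 := by
          have h : y ^ 2 = 0 := by rw [← hxy]; ring
          exact pow_eq_zero_iff (by norm_num) |>.mp h
        subst hy0
        have hz0 : z = 0 := by
          have h : z ^ 2 = 0 := by linear_combination heq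
          exact pow_eq_zero_iff (by norm_num) |>.mp h
        exact hne (by rw [hz0])
      have hz0 : z ≠ 0 := by
        intro h
        subst h
        apply hx0
        have h2x : 2 * x ^ 2 = 0 := by linear_combination heq + hxy
        rcases mul_eq_zero.mp h2x with h' | h'
        · exact absurd h' h2
        · exact pow_eq_zero_iff (by norm_num) |>.mp h'
      have hyx : (x - y) * (x + y) = 0 := by linear_combination hxy
      rcases mul_eq_zero.mp hyx with hc | hc
      · -- case y = x
        have hyx' : y = x := by linear_combination -hc
        subst hyx'
        have hu0 : z / y ≠ 0 := div_ne_zero hz0 hx0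
        have hu2 : (z / y) ^ 2 ≠ -2 := by
          intro h
          apply hz0
          have hz2 : z ^ 2 = -2 * y ^ 2 := by
            field_simp at h; linear_combination h
          have hz3 : y ^ 2 * z = 0 := by linear_combination hz2 - heq
          rcases mul_eq_zero.mp hz3 with h' | h'
          · exact absurd (pow_eq_zero_iff (by norm_num) |>.mp h') hx0
          · exact h'
        refine ⟨(true, ⟨z / y, hu0, hu2⟩), ?_⟩
        rw [hf]
        apply Subtype.ext
        simp only [if_true]
        refine Prod.ext ?_ (Prod.ext ?_ ?_)
        · simp only
          field_simp
          linear_combination (norm := ring_nf) heq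
        · simp only
          field_simp
          linear_combination (norm := ring_nf) heq
        · simp only
          field_simp
          linear_combination (norm := ring_nf) heq
      · -- case y = -x
        have hyx' : y = -x := by linear_combination hc
        subst hyx'
        have hu0 : z / x ≠ 0 := div_ne_zero hz0 hx0
        have hu2 : (z / x) ^ 2 ≠ -2 := by
          intro h
          apply hz0
          have hz2 : z ^ 2 = -2 * x ^ 2 := by
            field_simp at h; linear_combination h
          have hz3 : x ^ 2 * z = 0 := by linear_combination -hz2 + heq
          rcases mul_eq_zero.mp hz3 with h' | h'
          · exact absurd (pow_eq_zero_iff (by norm_num) |>.mp h') hx0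
          · exact h'
        refine ⟨(false, ⟨z / x, hu0, hu2⟩), ?_⟩
        rw [hf]
        apply Subtype.ext
        simp only [Bool.false_eq_true, if_false]
        refine Prod.ext ?_ (Prod.ext ?_ ?_)
        · simp only
          field_simp
          linear_combination (norm := ring_nf) -heq
        · simp only
          field_simp
          linear_combination (norm := ring_nf) heq
        · simp only
          field_simp
          linear_combination (norm := ring_nf) -heq
  rw [← Nat.card_eq_of_bijective f hbij, Nat.card_prod, Nat.card_eq_fintype_card,
    Fintype.card_bool, hcardT]
end

section
/- Let p be a prime with p ≡ 3 (mod 8). The coordinate transposition σ(x,y,z) = (y,x,z) preserves X*_{-2}(F_p), normalizes the Klein four-group N of even sign changes, and hence induces a permutation of the finite set Y_{-2}(F_p) of N-orbits. This induced permutation is even (has sign +1) if p ≡ 3 (mod 16), and is odd (has sign −1) if p ≡ 11 (mod 16). -/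
noncomputable instance (p : ℕ) [Fact p.Prime] : Fintype (YMinusTwo p) :=
  Fintype.ofFinite _

noncomputable instance (p : ℕ) : DecidableEq (YMinusTwo p) := Classical.decEq _

/-- `σ` is the permutation of `Y_{-2}(F_p)` induced by a map `f` of `F_p³` which
preserves `X*_{-2}(F_p)` and commutes with the Klein four-group `N`. -/
def Induces (p : ℕ) (f : ZMod p × ZMod p × ZMod p → ZMod p × ZMod p × ZMod p)
    (σ : Equiv.Perm (YMinusTwo p)) : Prop :=
  ∀ v w : MarkoffStar p, w.val = f v.val →
    σ (Quot.mk (kleinRel p) v) = Quot.mk (kleinRel p) w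

/-- The coordinate transposition `σ(x,y,z) = (y,x,z)`. -/
def swapXY (p : ℕ) (v : ZMod p × ZMod p × ZMod p) : ZMod p × ZMod p × ZMod p :=
  (v.2.1, v.1, v.2.2)

set_option maxHeartbeats 1600000

namespace MkAux

open Finset

variable {p : ℕ} [Fact p.Prime]

local notation "K" => ZMod p
local notation "χ" => quadraticChar (ZMod p)

section CharCount
variable (hp2 : p ≠ 2)
include hp2

lemma hchar : ringChar (ZMod p) ≠ 2 := by
  rw [ZMod.ringChar_zmod_n]; exact hp2

lemma two_ne : (2 : K) ≠ 0 := by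
  intro h
  have h' : ((2 : ℕ) : K) = 0 := by norm_cast
  rw [ZMod.natCast_eq_zero_iff] at h'
  exact hp2 ((Nat.prime_dvd_prime_iff_eq Fact.out Nat.prime_two).mp h')

lemma four_ne : (4 : K) ≠ 0 := by
  have h := two_ne hp2
  intro h4
  have h2 : (4 : K) = 2 * 2 := by norm_num
  rcases mul_eq_zero.mp (h2 ▸ h4) with h' | h' <;> exact h h'

lemma sum_chi_mul_shift {b : K} (hb : b ≠ 0) :
    ∑ t : K, χ (t * (t + b)) = -1 := by
  have h1 : ∑ t ∈ univ.erase (0 : K), χ (t * (t + b)) = ∑ t : K, χ (t * (t + b)) := by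
    rw [Finset.sum_erase]
    simp
  rw [← h1]
  have h2 : ∑ t ∈ univ.erase (0 : K), χ (t * (t + b)) = ∑ u ∈ univ.erase (1 : K), χ u := by
    refine Finset.sum_nbij' (fun t => 1 + b * t⁻¹) (fun u => b * (u - 1)⁻¹) ?_ ?_ ?_ ?_ ?_
    · intro t ht
      simp only [mem_erase, mem_univ, and_true] at ht ⊢
      intro h
      have h' : b * t⁻¹ = 0 := by linear_combination h
      rcases mul_eq_zero.mp h' with h'' | h''
      · exact hb h''
      · exact ht (by simpa using (inv_eq_zero.mp h''))
    · intro u hu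
      simp only [mem_erase, mem_univ, and_true] at hu ⊢
      have h1 : u - 1 ≠ 0 := sub_ne_zero.mpr hu
      exact mul_ne_zero hb (inv_ne_zero h1)
    · intro t ht
      simp only [mem_erase, mem_univ, and_true] at ht
      field_simp
      simp [hb]
    · intro u hu
      simp only [mem_erase, mem_univ, and_true] at hu
      have h1 : u - 1 ≠ 0 := sub_ne_zero.mpr hu
      field_simp
      try ring
    · intro t ht
      simp only [mem_erase, mem_univ, and_true] at ht
      have : t * (t + b) = t ^ 2 * (1 + b * t⁻¹) := by field_simp
      rw [this, map_mul, quadraticChar_sq_one' ht, one_mul]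
  rw [h2]
  have h3 : (1 : ℤ) + ∑ u ∈ univ.erase (1 : K), χ u = ∑ u : K, χ u := by
    have := Finset.add_sum_erase univ (fun u : K => χ u) (mem_univ (1 : K))
    simpa using this
  have h4 := quadraticChar_sum_zero (hchar hp2)
  linarith

lemma sum_chi_sq_add {b : K} (hb : b ≠ 0) :
    ∑ x : K, χ (x ^ 2 + b) = -1 := by
  have key : ∑ x : K, χ (x ^ 2 + b) =
      ∑ t : K, (((univ.filter fun x : K => x ^ 2 = t).card : ℤ) * χ (t + b)) := by
    rw [← Finset.sum_fiberwise (univ : Finset K) (fun x => x ^ 2) (fun x => χ (x ^ 2 + b))]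
    refine Finset.sum_congr rfl fun t _ => ?_
    calc ∑ x ∈ univ.filter (fun x : K => x ^ 2 = t), χ (x ^ 2 + b)
        = ∑ _x ∈ univ.filter (fun x : K => x ^ 2 = t), χ (t + b) :=
          Finset.sum_congr rfl fun x hx => by rw [(mem_filter.mp hx).2]
      _ = _ := by rw [Finset.sum_const, nsmul_eq_mul]
  rw [key]
  have hcard : ∀ t : K, ((univ.filter fun x : K => x ^ 2 = t).card : ℤ) = χ t + 1 := by
    intro t
    have := quadraticChar_card_sqrts (hchar hp2) t
    rw [← this]
    congr 1
    simp [Set.toFinset_setOf]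
  calc ∑ t : K, (((univ.filter fun x : K => x ^ 2 = t).card : ℤ) * χ (t + b))
      = ∑ t : K, ((χ t + 1) * χ (t + b)) := by
        refine Finset.sum_congr rfl fun t _ => by rw [hcard t]
    _ = ∑ t : K, χ (t * (t + b)) + ∑ t : K, χ (t + b) := by
        rw [← Finset.sum_add_distrib]
        refine Finset.sum_congr rfl fun t _ => by rw [map_mul]; ring
    _ = -1 := by
        have h1 : ∑ t : K, χ (t + b) = ∑ u : K, χ u :=
          Fintype.sum_equiv (Equiv.addRight b) _ _ (fun t => rfl)
        rw [h1, quadraticChar_sum_zero (hchar hp2), sum_chi_mul_shift hp2 hb, add_zero]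

lemma sum_chi_quad {c d : K} (hc : c ≠ 0) (hd : d ≠ 0) :
    ∑ y : K, χ (c * y ^ 2 + d) = -χ c := by
  have h1 : ∀ y : K, χ (c * y ^ 2 + d) = χ c * χ (y ^ 2 + d * c⁻¹) := by
    intro y
    rw [← map_mul]
    congr 1
    field_simp
    try ring
  calc ∑ y : K, χ (c * y ^ 2 + d) = χ c * ∑ y : K, χ (y ^ 2 + d * c⁻¹) := by
        rw [Finset.mul_sum]; exact Finset.sum_congr rfl fun y _ => h1 y
    _ = -χ c := by
        rw [sum_chi_sq_add hp2 (mul_ne_zero hd (inv_ne_zero hc))]; ring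

lemma sum_chi_sq_sub_four : ∑ z : K, χ (z ^ 2 - 4) = -1 := by
  have h := sum_chi_mul_shift hp2 (four_ne hp2)
  rw [← h]
  exact Fintype.sum_equiv (Equiv.addRight (-2 : K)) _ _
    (fun t => by simp only [Equiv.coe_addRight]; congr 1; ring)


lemma neg_two_ne : (-2 : K) ≠ 0 := neg_ne_zero.mpr (two_ne hp2)

lemma two_ne_neg_two : (2 : K) ≠ -2 := by
  intro h
  apply four_ne hp2
  have : (4 : K) = 2 - (-2) := by ring
  rw [this, ← h, sub_self]

lemma chi_neg_one (hp4 : p % 4 = 3) : χ (-1) = -1 := by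
  refine quadraticChar_neg_one_iff_not_isSquare.mpr ?_
  rw [ZMod.exists_sq_eq_neg_one_iff]
  simp [hp4]

lemma chi_neg_four (hp4 : p % 4 = 3) : χ (-4) = -1 := by
  have h : (-4 : K) = -1 * 2 ^ 2 := by ring
  rw [h, map_mul, quadraticChar_sq_one' (two_ne hp2), chi_neg_one hp2 hp4, mul_one]

lemma chi_neg_two (hp8 : p % 8 = 3) : χ (-2) = 1 := by
  refine (quadraticChar_one_iff_isSquare (neg_two_ne hp2)).mpr ?_
  rw [ZMod.exists_sq_eq_neg_two_iff hp2]
  exact Or.inr hp8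

lemma split3 (f : K → ℤ) :
    ∑ y : K, f y = f 0 + f 2 + f (-2) +
      ∑ y ∈ ((univ.erase (0 : K)).erase 2).erase (-2), f y := by
  have m2 : (2 : K) ∈ univ.erase (0 : K) := by
    simp [mem_erase, two_ne hp2]
  have m3 : (-2 : K) ∈ (univ.erase (0 : K)).erase 2 := by
    have hne : (-2 : K) ≠ 2 := fun h => two_ne_neg_two hp2 h.symm
    simp [mem_erase, neg_two_ne hp2, hne]
  rw [← Finset.add_sum_erase univ f (mem_univ (0 : K)),
    ← Finset.add_sum_erase _ f m2, ← Finset.add_sum_erase _ f m3]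
  ring

lemma sum_sq_sub_four_erased (hp4 : p % 4 = 3) :
    ∑ y ∈ ((univ.erase (0 : K)).erase 2).erase (-2), χ (y ^ 2 - 4) = 0 := by
  have h := split3 hp2 (fun y : K => χ (y ^ 2 - 4))
  rw [sum_chi_sq_sub_four hp2] at h
  have h0 : ((0 : K) ^ 2 - 4) = -4 := by ring
  have h2 : ((2 : K) ^ 2 - 4) = 0 := by ring
  have h3 : ((-2 : K) ^ 2 - 4) = 0 := by ring
  simp only [h0, h2, h3, MulChar.map_zero, chi_neg_four hp2 hp4] at h
  linarith


omit hp2 in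
lemma inner_const (c : ℤ) : ∑ _z : K, c = (p : ℤ) * c := by
  rw [Finset.sum_const, card_univ, ZMod.card, nsmul_eq_mul]

lemma chi_neg_sixteen (hp4 : p % 4 = 3) : χ (-16) = -1 := by
  have h : (-16 : K) = -1 * 4 ^ 2 := by ring
  rw [h, map_mul, quadraticChar_sq_one' (four_ne hp2), chi_neg_one hp2 hp4, mul_one]

lemma sum_main (hp4 : p % 4 = 3) :
    ∑ w : K × K, χ ((w.1 * w.2) ^ 2 - 4 * w.1 ^ 2 - 4 * w.2 ^ 2) = 1 - 3 * p := by
  rw [Fintype.sum_prod_type]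
  have hrw : ∀ y : K, ∑ z : K, χ ((y * z) ^ 2 - 4 * y ^ 2 - 4 * z ^ 2)
      = ∑ z : K, χ ((y ^ 2 - 4) * z ^ 2 + (-(4 * y ^ 2))) :=
    fun y => Finset.sum_congr rfl fun z _ => by congr 1; ring
  calc ∑ y : K, ∑ z : K, χ ((y * z) ^ 2 - 4 * y ^ 2 - 4 * z ^ 2)
      = ∑ y : K, ∑ z : K, χ ((y ^ 2 - 4) * z ^ 2 + (-(4 * y ^ 2))) :=
        Finset.sum_congr rfl fun y _ => hrw y
    _ = 1 - 3 * p := ?_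
  set F : K → ℤ := fun y => ∑ z : K, χ ((y ^ 2 - 4) * z ^ 2 + (-(4 * y ^ 2))) with hF
  rw [split3 hp2 F]
  -- F 0
  have h0 : F 0 = 1 - p := by
    rw [hF]
    simp only
    have harg : ∀ z : K, ((0 : K) ^ 2 - 4) * z ^ 2 + (-(4 * (0:K) ^ 2)) = -1 * (2 * z) ^ 2 := by
      intro z; ring
    calc ∑ z : K, χ (((0 : K) ^ 2 - 4) * z ^ 2 + (-(4 * (0:K) ^ 2)))
        = ∑ z : K, χ (-1 * (2 * z) ^ 2) := Finset.sum_congr rfl fun z _ => by rw [harg z]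
      _ = ∑ z ∈ univ.erase (0 : K), χ (-1 * (2 * z) ^ 2) := by
          rw [Finset.sum_erase]
          simp
      _ = ∑ _z ∈ univ.erase (0 : K), (-1 : ℤ) := by
          refine Finset.sum_congr rfl fun z hz => ?_
          have hz0 : z ≠ 0 := (mem_erase.mp hz).1
          rw [map_mul, quadraticChar_sq_one' (mul_ne_zero (two_ne hp2) hz0),
            chi_neg_one hp2 hp4, mul_one]
      _ = 1 - p := by
          rw [Finset.sum_const, Finset.card_erase_of_mem (mem_univ _), card_univ, ZMod.card,
            nsmul_eq_mul]
          have h1 : 1 ≤ p := (Fact.out : p.Prime).one_lt.le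
          push_cast [Nat.cast_sub h1]
          ring
  -- F 2 and F (-2)
  have harg2 : ∀ z : K, ((2 : K) ^ 2 - 4) * z ^ 2 + (-(4 * (2:K) ^ 2)) = -16 := fun z => by ring
  have harg3 : ∀ z : K, ((-2 : K) ^ 2 - 4) * z ^ 2 + (-(4 * (-2:K) ^ 2)) = -16 := fun z => by ring
  have h2 : F 2 = -p := by
    rw [hF]
    simp only
    calc ∑ z : K, χ (((2 : K) ^ 2 - 4) * z ^ 2 + (-(4 * (2:K) ^ 2)))
        = ∑ _z : K, (-1 : ℤ) :=
          Finset.sum_congr rfl fun z _ => by rw [harg2 z, chi_neg_sixteen hp2 hp4]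
      _ = -p := by rw [inner_const]; ring
  have h3 : F (-2) = -p := by
    rw [hF]
    simp only
    calc ∑ z : K, χ (((-2 : K) ^ 2 - 4) * z ^ 2 + (-(4 * (-2:K) ^ 2)))
        = ∑ _z : K, (-1 : ℤ) :=
          Finset.sum_congr rfl fun z _ => by rw [harg3 z, chi_neg_sixteen hp2 hp4]
      _ = -p := by rw [inner_const]; ring
  -- generic y
  have hgen : ∑ y ∈ ((univ.erase (0 : K)).erase 2).erase (-2), F y
      = ∑ y ∈ ((univ.erase (0 : K)).erase 2).erase (-2), (-χ (y ^ 2 - 4)) := by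
    refine Finset.sum_congr rfl fun y hy => ?_
    simp only [mem_erase] at hy
    obtain ⟨hy3, hy2, hy0, -⟩ := hy
    have hc : (y ^ 2 - 4 : K) ≠ 0 := by
      intro h
      have hfac : (y - 2) * (y + 2) = 0 := by linear_combination h
      rcases mul_eq_zero.mp hfac with h' | h'
      · exact hy2 (by linear_combination h')
      · exact hy3 (by linear_combination h')
    have hd : (-(4 * y ^ 2) : K) ≠ 0 :=
      neg_ne_zero.mpr (mul_ne_zero (four_ne hp2) (pow_ne_zero _ hy0))
    exact sum_chi_quad hp2 hc hd
  rw [h0, h2, h3, hgen, Finset.sum_neg_distrib, sum_sq_sub_four_erased hp2 hp4]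
  ring


lemma card_quadratic (b c : K) :
    ((univ.filter fun x : K => x ^ 2 + b * x + c = 0).card : ℤ) = χ (b ^ 2 - 4 * c) + 1 := by
  have hsq := quadraticChar_card_sqrts (hchar hp2) (b ^ 2 - 4 * c)
  rw [← hsq]
  congr 1
  have hset : {x : K | x ^ 2 = b ^ 2 - 4 * c}.toFinset
      = univ.filter fun x : K => x ^ 2 = b ^ 2 - 4 * c := by
    simp [Set.toFinset_setOf]
  rw [hset]
  refine Finset.card_nbij' (fun x => 2 * x + b) (fun u => (u - b) * (2 : K)⁻¹) ?_ ?_ ?_ ?_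
  · intro x hx
    simp only [mem_coe, mem_filter, mem_univ, true_and] at hx ⊢
    linear_combination 4 * hx
  · intro u hu
    simp only [mem_coe, mem_filter, mem_univ, true_and] at hu ⊢
    have h2 := two_ne hp2
    field_simp
    linear_combination hu
  · intro x _
    have h2 := two_ne hp2
    field_simp
    ring
  · intro u _
    have h2 := two_ne hp2
    field_simp
    ring

lemma cardX (hp4 : p % 4 = 3) :
    ((univ.filter fun v : K × K × K =>
        v.1 ^ 2 + v.2.1 ^ 2 + v.2.2 ^ 2 = v.1 * v.2.1 * v.2.2).card : ℤ)
      = (p : ℤ) ^ 2 - 3 * p + 1 := by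
  have hfib := Finset.card_eq_sum_card_fiberwise
    (s := univ.filter fun v : K × K × K =>
        v.1 ^ 2 + v.2.1 ^ 2 + v.2.2 ^ 2 = v.1 * v.2.1 * v.2.2)
    (t := (univ : Finset (K × K))) (f := fun v => v.2) (fun v _ => mem_univ _)
  have hfiber : ∀ w : K × K,
      (((univ.filter fun v : K × K × K =>
        v.1 ^ 2 + v.2.1 ^ 2 + v.2.2 ^ 2 = v.1 * v.2.1 * v.2.2).filter
          fun v => v.2 = w).card : ℤ)
      = χ ((w.1 * w.2) ^ 2 - 4 * w.1 ^ 2 - 4 * w.2 ^ 2) + 1 := by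
    intro w
    have hcq := card_quadratic hp2 (-(w.1 * w.2)) (w.1 ^ 2 + w.2 ^ 2)
    have hbij : ((univ.filter fun v : K × K × K =>
        v.1 ^ 2 + v.2.1 ^ 2 + v.2.2 ^ 2 = v.1 * v.2.1 * v.2.2).filter
          fun v => v.2 = w).card
        = (univ.filter fun x : K =>
            x ^ 2 + (-(w.1 * w.2)) * x + (w.1 ^ 2 + w.2 ^ 2) = 0).card := by
      refine Finset.card_nbij' (fun v => v.1) (fun x => (x, w)) ?_ ?_ ?_ ?_
      · intro v hv
        simp only [mem_coe, mem_filter, mem_univ, true_and] at hv ⊢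
        obtain ⟨hP, hw⟩ := hv
        rw [← hw]
        linear_combination hP
      · intro x hx
        simp only [mem_coe, mem_filter, mem_univ, true_and] at hx ⊢
        refine ⟨?_, trivial⟩
        linear_combination hx
      · intro v hv
        simp only [mem_coe, mem_filter, mem_univ, true_and] at hv
        rw [← hv.2]
      · intro x _
        rfl
    rw [hbij, hcq]
    congr 1
    congr 1
    ring
  have hcast : ((univ.filter fun v : K × K × K =>
        v.1 ^ 2 + v.2.1 ^ 2 + v.2.2 ^ 2 = v.1 * v.2.1 * v.2.2).card : ℤ)
      = ∑ w : K × K, (χ ((w.1 * w.2) ^ 2 - 4 * w.1 ^ 2 - 4 * w.2 ^ 2) + 1) := by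
    rw [hfib]
    push_cast
    exact Finset.sum_congr rfl fun w _ => hfiber w
  rw [hcast, Finset.sum_add_distrib, sum_main hp2 hp4, Finset.sum_const, card_univ,
    Fintype.card_prod, ZMod.card, nsmul_eq_mul]
  push_cast
  ring

lemma cardC (hp8 : p % 8 = 3) :
    ((univ.filter fun w : K × K => 2 * w.1 ^ 2 + w.2 ^ 2 = w.1 ^ 2 * w.2).card : ℤ)
      = (p : ℤ) - 2 := by
  have hfib := Finset.card_eq_sum_card_fiberwise
    (s := univ.filter fun w : K × K => 2 * w.1 ^ 2 + w.2 ^ 2 = w.1 ^ 2 * w.2)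
    (t := (univ : Finset K)) (f := fun w => w.1) (fun w _ => mem_univ _)
  have hfiber : ∀ x : K,
      (((univ.filter fun w : K × K => 2 * w.1 ^ 2 + w.2 ^ 2 = w.1 ^ 2 * w.2).filter
          fun w => w.1 = x).card : ℤ)
      = χ (x ^ 4 - 8 * x ^ 2) + 1 := by
    intro x
    have hcq := card_quadratic hp2 (-(x ^ 2)) (2 * x ^ 2)
    have hbij : ((univ.filter fun w : K × K => 2 * w.1 ^ 2 + w.2 ^ 2 = w.1 ^ 2 * w.2).filter
          fun w => w.1 = x).card
        = (univ.filter fun z : K => z ^ 2 + (-(x ^ 2)) * z + 2 * x ^ 2 = 0).card := by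
      refine Finset.card_nbij' (fun w => w.2) (fun z => (x, z)) ?_ ?_ ?_ ?_
      · intro w hw
        simp only [mem_coe, mem_filter, mem_univ, true_and] at hw ⊢
        obtain ⟨hP, hx⟩ := hw
        rw [← hx]
        linear_combination hP
      · intro z hz
        simp only [mem_coe, mem_filter, mem_univ, true_and] at hz ⊢
        refine ⟨?_, trivial⟩
        linear_combination hz
      · intro w hw
        simp only [mem_coe, mem_filter, mem_univ, true_and] at hw
        rw [← hw.2]
      · intro z _
        rfl
    rw [hbij, hcq]
    congr 1
    congr 1
    ring
  have hcast : ((univ.filter fun w : K × K =>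
      2 * w.1 ^ 2 + w.2 ^ 2 = w.1 ^ 2 * w.2).card : ℤ)
      = ∑ x : K, (χ (x ^ 4 - 8 * x ^ 2) + 1) := by
    rw [hfib]
    push_cast
    exact Finset.sum_congr rfl fun x _ => hfiber x
  have hsum : ∑ x : K, χ (x ^ 4 - 8 * x ^ 2) = -2 := by
    have h8ne : (-8 : K) ≠ 0 := by
      have : (-8 : K) = -2 * 4 := by ring
      rw [this]
      exact mul_ne_zero (neg_two_ne hp2) (four_ne hp2)
    have htot : ∑ x : K, χ (x ^ 2 + (-8)) = -1 := sum_chi_sq_add hp2 h8ne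
    have hchi8 : χ ((0 : K) ^ 2 + (-8)) = 1 := by
      have harg : ((0 : K) ^ 2 + (-8)) = -2 * 2 ^ 2 := by ring
      rw [harg, map_mul, quadraticChar_sq_one' (two_ne hp2), chi_neg_two hp2 hp8, mul_one]
    have herase : ∑ x ∈ univ.erase (0 : K), χ (x ^ 2 + (-8)) = -2 := by
      have h := Finset.add_sum_erase univ (fun x : K => χ (x ^ 2 + (-8))) (mem_univ (0 : K))
      rw [htot] at h
      rw [hchi8] at h
      linarith
    calc ∑ x : K, χ (x ^ 4 - 8 * x ^ 2)
        = ∑ x ∈ univ.erase (0 : K), χ (x ^ 4 - 8 * x ^ 2) := by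
          rw [Finset.sum_erase]
          norm_num
      _ = ∑ x ∈ univ.erase (0 : K), χ (x ^ 2 + (-8)) := by
          refine Finset.sum_congr rfl fun x hx => ?_
          have hx0 : x ≠ 0 := (mem_erase.mp hx).1
          have harg : x ^ 4 - 8 * x ^ 2 = x ^ 2 * (x ^ 2 + (-8)) := by ring
          rw [harg, map_mul, quadraticChar_sq_one' hx0, one_mul]
      _ = -2 := herase
  rw [hcast, Finset.sum_add_distrib, hsum, Finset.sum_const, card_univ, ZMod.card,
    nsmul_eq_mul]
  push_cast
  ring


lemma cardB (hp8 : p % 8 = 3) :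
    ((univ.filter fun v : K × K × K =>
        (v.1 ^ 2 + v.2.1 ^ 2 + v.2.2 ^ 2 = v.1 * v.2.1 * v.2.2) ∧ v.1 ^ 2 = v.2.1 ^ 2).card : ℤ)
      = 2 * (p : ℤ) - 5 := by
  have hiff : ∀ v : K × K × K,
      ((v.1 ^ 2 + v.2.1 ^ 2 + v.2.2 ^ 2 = v.1 * v.2.1 * v.2.2) ∧ v.1 ^ 2 = v.2.1 ^ 2) ↔
      (((v.1 ^ 2 + v.2.1 ^ 2 + v.2.2 ^ 2 = v.1 * v.2.1 * v.2.2) ∧ v.1 = v.2.1) ∨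
       ((v.1 ^ 2 + v.2.1 ^ 2 + v.2.2 ^ 2 = v.1 * v.2.1 * v.2.2) ∧ v.1 = -v.2.1)) := by
    intro v
    constructor
    · rintro ⟨hP, hsq⟩
      have hfac : (v.1 - v.2.1) * (v.1 + v.2.1) = 0 := by linear_combination hsq
      rcases mul_eq_zero.mp hfac with h | h
      · exact Or.inl ⟨hP, by linear_combination h⟩
      · exact Or.inr ⟨hP, by linear_combination h⟩
    · rintro (⟨hP, h⟩ | ⟨hP, h⟩)
      · exact ⟨hP, by rw [h]⟩
      · exact ⟨hP, by rw [h]; ring⟩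
  rw [Finset.filter_congr fun v _ => hiff v, Finset.filter_or]
  have hu := Finset.card_union_add_card_inter
    (univ.filter fun v : K × K × K =>
        (v.1 ^ 2 + v.2.1 ^ 2 + v.2.2 ^ 2 = v.1 * v.2.1 * v.2.2) ∧ v.1 = v.2.1)
    (univ.filter fun v : K × K × K =>
        (v.1 ^ 2 + v.2.1 ^ 2 + v.2.2 ^ 2 = v.1 * v.2.1 * v.2.2) ∧ v.1 = -v.2.1)
  rw [← Finset.filter_and] at hu
  have hinter : (univ.filter fun v : K × K × K =>
      ((v.1 ^ 2 + v.2.1 ^ 2 + v.2.2 ^ 2 = v.1 * v.2.1 * v.2.2) ∧ v.1 = v.2.1) ∧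
      ((v.1 ^ 2 + v.2.1 ^ 2 + v.2.2 ^ 2 = v.1 * v.2.1 * v.2.2) ∧ v.1 = -v.2.1))
      = {((0 : K), (0 : K), (0 : K))} := by
    ext v
    simp only [mem_filter, mem_univ, true_and, mem_singleton]
    constructor
    · rintro ⟨⟨hP, h1⟩, -, h2⟩
      have hy : (2 : K) * v.2.1 = 0 := by linear_combination h2 - h1
      have hy0 : v.2.1 = 0 := by
        rcases mul_eq_zero.mp hy with h | h
        · exact absurd h (two_ne hp2)
        · exact h
      have hx0 : v.1 = 0 := by rw [h1, hy0]
      have hz : v.2.2 ^ 2 = 0 := by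
        linear_combination hP + (-v.1 + v.2.1 * v.2.2) * hx0 + (-v.2.1) * hy0
      have hz0 : v.2.2 = 0 := sq_eq_zero_iff.mp hz
      simp [Prod.ext_iff, hx0, hy0, hz0]
    · rintro rfl
      norm_num
  have hc1 : ((univ.filter fun v : K × K × K =>
      (v.1 ^ 2 + v.2.1 ^ 2 + v.2.2 ^ 2 = v.1 * v.2.1 * v.2.2) ∧ v.1 = v.2.1).card : ℤ)
      = (p : ℤ) - 2 := by
    have hbij : (univ.filter fun v : K × K × K =>
        (v.1 ^ 2 + v.2.1 ^ 2 + v.2.2 ^ 2 = v.1 * v.2.1 * v.2.2) ∧ v.1 = v.2.1).card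
        = (univ.filter fun w : K × K => 2 * w.1 ^ 2 + w.2 ^ 2 = w.1 ^ 2 * w.2).card := by
      refine Finset.card_nbij' (fun v => (v.1, v.2.2)) (fun w => (w.1, w.1, w.2)) ?_ ?_ ?_ ?_
      · intro v hv
        simp only [mem_coe, mem_filter, mem_univ, true_and] at hv ⊢
        obtain ⟨hP, h⟩ := hv
        linear_combination hP + (v.1 + v.2.1 - v.1 * v.2.2) * h
      · intro w hw
        simp only [mem_coe, mem_filter, mem_univ, true_and] at hw ⊢
        exact ⟨by linear_combination hw, trivial⟩
      · intro v hv
        simp only [mem_coe, mem_filter, mem_univ, true_and] at hv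
        simp [Prod.ext_iff, hv.2]
      · intro w _
        rfl
    rw [hbij]
    exact cardC hp2 hp8
  have hc2 : ((univ.filter fun v : K × K × K =>
      (v.1 ^ 2 + v.2.1 ^ 2 + v.2.2 ^ 2 = v.1 * v.2.1 * v.2.2) ∧ v.1 = -v.2.1).card : ℤ)
      = (p : ℤ) - 2 := by
    have hbij : (univ.filter fun v : K × K × K =>
        (v.1 ^ 2 + v.2.1 ^ 2 + v.2.2 ^ 2 = v.1 * v.2.1 * v.2.2) ∧ v.1 = -v.2.1).card
        = (univ.filter fun w : K × K => 2 * w.1 ^ 2 + w.2 ^ 2 = w.1 ^ 2 * w.2).card := by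
      refine Finset.card_nbij' (fun v => (v.1, -v.2.2)) (fun w => (w.1, -w.1, -w.2)) ?_ ?_ ?_ ?_
      · intro v hv
        simp only [mem_coe, mem_filter, mem_univ, true_and] at hv ⊢
        obtain ⟨hP, h⟩ := hv
        linear_combination hP + (v.1 - v.2.1 + v.1 * v.2.2) * h
      · intro w hw
        simp only [mem_coe, mem_filter, mem_univ, true_and] at hw ⊢
        constructor
        · linear_combination hw
        · rw [neg_neg]
      · intro v hv
        simp only [mem_coe, mem_filter, mem_univ, true_and] at hv
        have h := hv.2
        simp only [Prod.ext_iff]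
        refine ⟨trivial, by linear_combination -h, by rw [neg_neg]⟩
      · intro w _
        simp [Prod.ext_iff]
    rw [hbij]
    exact cardC hp2 hp8
  rw [hinter, Finset.card_singleton] at hu
  have hu' := congrArg (fun n : ℕ => (n : ℤ)) hu
  push_cast at hu'
  linarith

lemma cardA (hp8 : p % 8 = 3) :
    ((univ.filter fun v : K × K × K =>
        (v.1 ^ 2 + v.2.1 ^ 2 + v.2.2 ^ 2 = v.1 * v.2.1 * v.2.2) ∧
          ¬ v.1 ^ 2 = v.2.1 ^ 2).card : ℤ)
      = (p : ℤ) ^ 2 - 5 * p + 6 := by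
  have hp4 : p % 4 = 3 := by omega
  have hpart := Finset.card_filter_add_card_filter_not
    (s := univ.filter fun v : K × K × K =>
        v.1 ^ 2 + v.2.1 ^ 2 + v.2.2 ^ 2 = v.1 * v.2.1 * v.2.2)
    (p := fun v : K × K × K => v.1 ^ 2 = v.2.1 ^ 2)
  rw [Finset.filter_filter, Finset.filter_filter] at hpart
  have hX := cardX hp2 hp4
  have hB := cardB hp2 hp8
  have hp' := congrArg (fun n : ℕ => (n : ℤ)) hpart
  push_cast at hp'
  linarith

end CharCount

-- ## Part 2: quotient and permutation machinery

section Quotient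

@[simp] lemma sc11 (v : K × K × K) : signChange1 p (signChange1 p v) = v := by
  simp [signChange1]
@[simp] lemma sc22 (v : K × K × K) : signChange2 p (signChange2 p v) = v := by
  simp [signChange2]
@[simp] lemma sc33 (v : K × K × K) : signChange3 p (signChange3 p v) = v := by
  simp [signChange3]
@[simp] lemma sc12 (v : K × K × K) : signChange1 p (signChange2 p v) = signChange3 p v := by
  simp [signChange1, signChange2, signChange3]
@[simp] lemma sc21 (v : K × K × K) : signChange2 p (signChange1 p v) = signChange3 p v := by
  simp [signChange1, signChange2, signChange3]
@[simp] lemma sc13 (v : K × K × K) : signChange1 p (signChange3 p v) = signChange2 p v := by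
  simp [signChange1, signChange2, signChange3]
@[simp] lemma sc31 (v : K × K × K) : signChange3 p (signChange1 p v) = signChange2 p v := by
  simp [signChange1, signChange2, signChange3]
@[simp] lemma sc23 (v : K × K × K) : signChange2 p (signChange3 p v) = signChange1 p v := by
  simp [signChange1, signChange2, signChange3]
@[simp] lemma sc32 (v : K × K × K) : signChange3 p (signChange2 p v) = signChange1 p v := by
  simp [signChange1, signChange2, signChange3]

lemma klein_equiv : Equivalence (kleinRel p) := by
  constructor
  · intro a
    exact Or.inl rfl
  · intro a b h
    rcases h with h | h | h | h
    · exact Or.inl h.symm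
    · exact Or.inr (Or.inl (by rw [h]; simp))
    · exact Or.inr (Or.inr (Or.inl (by rw [h]; simp)))
    · exact Or.inr (Or.inr (Or.inr (by rw [h]; simp)))
  · intro a b c hab hbc
    rcases hab with h | h | h | h <;> rcases hbc with g | g | g | g <;> rw [h] at g <;>
      (try simp only [sc11, sc22, sc33, sc12, sc21, sc13, sc31, sc23, sc32] at g) <;>
      unfold kleinRel <;> tauto

lemma mk_eq (a b : MarkoffStar p) :
    Quot.mk (kleinRel p) a = Quot.mk (kleinRel p) b ↔ kleinRel p a b := by
  rw [Quot.eq]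
  exact (klein_equiv (p := p)).eqvGen_iff

-- coordinate zero lemmas
lemma zero23 (v : MarkoffStar p) (h2 : v.val.2.1 = 0) (h3 : v.val.2.2 = 0) : False := by
  obtain ⟨heq, hne⟩ := v.2
  apply hne
  have hx : v.val.1 ^ 2 = 0 := by
    linear_combination heq + (-v.val.2.1 + v.val.1 * v.val.2.2) * h2 + (-v.val.2.2) * h3
  have hx0 := sq_eq_zero_iff.mp hx
  rw [Prod.ext_iff, Prod.ext_iff]
  exact ⟨hx0, h2, h3⟩

lemma zero13 (v : MarkoffStar p) (h1 : v.val.1 = 0) (h3 : v.val.2.2 = 0) : False := by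
  obtain ⟨heq, hne⟩ := v.2
  apply hne
  have hy : v.val.2.1 ^ 2 = 0 := by
    linear_combination heq + (-v.val.1 + v.val.2.1 * v.val.2.2) * h1 + (-v.val.2.2) * h3
  have hy0 := sq_eq_zero_iff.mp hy
  rw [Prod.ext_iff, Prod.ext_iff]
  exact ⟨h1, hy0, h3⟩

lemma zero12 (v : MarkoffStar p) (h1 : v.val.1 = 0) (h2 : v.val.2.1 = 0) : False := by
  obtain ⟨heq, hne⟩ := v.2
  apply hne
  have hz : v.val.2.2 ^ 2 = 0 := by
    linear_combination heq + (-v.val.1 + v.val.2.1 * v.val.2.2) * h1 + (-v.val.2.1) * h2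
  have hz0 := sq_eq_zero_iff.mp hz
  rw [Prod.ext_iff, Prod.ext_iff]
  exact ⟨h1, h2, hz0⟩

-- subtype versions of the sign changes and the swap
def N1 (v : MarkoffStar p) : MarkoffStar p :=
  ⟨signChange1 p v.val, by
    obtain ⟨heq, hne⟩ := v.2
    refine ⟨by simp only [signChange1]; linear_combination heq, ?_⟩
    intro h0
    apply hne
    simp only [signChange1, Prod.ext_iff, neg_eq_zero] at h0 ⊢
    exact h0⟩

def N2 (v : MarkoffStar p) : MarkoffStar p :=
  ⟨signChange2 p v.val, by
    obtain ⟨heq, hne⟩ := v.2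
    refine ⟨by simp only [signChange2]; linear_combination heq, ?_⟩
    intro h0
    apply hne
    simp only [signChange2, Prod.ext_iff, neg_eq_zero] at h0 ⊢
    exact h0⟩

def N3 (v : MarkoffStar p) : MarkoffStar p :=
  ⟨signChange3 p v.val, by
    obtain ⟨heq, hne⟩ := v.2
    refine ⟨by simp only [signChange3]; linear_combination heq, ?_⟩
    intro h0
    apply hne
    simp only [signChange3, Prod.ext_iff, neg_eq_zero] at h0 ⊢
    exact h0⟩

def SW (v : MarkoffStar p) : MarkoffStar p :=
  ⟨swapXY p v.val, by
    obtain ⟨heq, hne⟩ := v.2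
    refine ⟨by simp only [swapXY]; linear_combination heq, ?_⟩
    intro h0
    apply hne
    simp only [swapXY, Prod.ext_iff] at h0 ⊢
    tauto⟩

@[simp] lemma swsw (v : K × K × K) : swapXY p (swapXY p v) = v := by
  simp [swapXY]

@[simp] lemma N1_val (v : MarkoffStar p) : (N1 v).val = signChange1 p v.val := rfl
@[simp] lemma N2_val (v : MarkoffStar p) : (N2 v).val = signChange2 p v.val := rfl
@[simp] lemma N3_val (v : MarkoffStar p) : (N3 v).val = signChange3 p v.val := rfl
@[simp] lemma SW_val (v : MarkoffStar p) : (SW v).val = swapXY p v.val := rfl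

lemma SW_inv (v : MarkoffStar p) : SW (SW v) = v := Subtype.ext (by
  show swapXY p (swapXY p v.val) = v.val
  simp)

@[simp] lemma swsc1 (v : K × K × K) :
    swapXY p (signChange1 p v) = signChange2 p (swapXY p v) := by
  simp [swapXY, signChange1, signChange2]
@[simp] lemma swsc2 (v : K × K × K) :
    swapXY p (signChange2 p v) = signChange1 p (swapXY p v) := by
  simp [swapXY, signChange1, signChange2]
@[simp] lemma swsc3 (v : K × K × K) :
    swapXY p (signChange3 p v) = signChange3 p (swapXY p v) := by
  simp [swapXY, signChange3]

lemma SW_compat (a b : MarkoffStar p) (h : kleinRel p a b) :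
    kleinRel p (SW a) (SW b) := by
  rcases h with h | h | h | h
  · exact Or.inl (by show swapXY p b.val = swapXY p a.val; rw [h])
  · refine Or.inr (Or.inr (Or.inl ?_))
    show swapXY p b.val = signChange2 p (swapXY p a.val)
    rw [h]; simp
  · refine Or.inr (Or.inl ?_)
    show swapXY p b.val = signChange1 p (swapXY p a.val)
    rw [h]; simp
  · refine Or.inr (Or.inr (Or.inr ?_))
    show swapXY p b.val = signChange3 p (swapXY p a.val)
    rw [h]; simp

def sigmaY (p : ℕ) [Fact p.Prime] : Equiv.Perm (YMinusTwo p) where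
  toFun := Quot.map SW (SW_compat)
  invFun := Quot.map SW (SW_compat)
  left_inv := by
    intro q
    induction q using Quot.ind with
    | _ v =>
      show Quot.mk (kleinRel p) (SW (SW v)) = Quot.mk (kleinRel p) v
      rw [SW_inv]
  right_inv := by
    intro q
    induction q using Quot.ind with
    | _ v =>
      show Quot.mk (kleinRel p) (SW (SW v)) = Quot.mk (kleinRel p) v
      rw [SW_inv]

lemma sigma_mk (v : MarkoffStar p) :
    sigmaY p (Quot.mk (kleinRel p) v) = Quot.mk (kleinRel p) (SW v) := rfl

lemma sigma_induces : Induces p (swapXY p) (sigmaY p) := by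
  intro v w h
  rw [sigma_mk]
  exact Quot.sound (Or.inl h)

lemma sigma_sq : sigmaY p * sigmaY p = 1 := by
  refine Equiv.ext fun q => ?_
  induction q using Quot.ind with
  | _ v =>
    show sigmaY p (sigmaY p (Quot.mk (kleinRel p) v)) = Quot.mk (kleinRel p) v
    rw [sigma_mk, sigma_mk, SW_inv]

lemma rel_swap_iff (v : MarkoffStar p) :
    kleinRel p v (SW v) ↔ v.val.1 ^ 2 = v.val.2.1 ^ 2 := by
  constructor
  · intro h
    rcases h with h | h | h | h
    · have h' : (v.val.2.1, v.val.1, v.val.2.2) = _ := h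
      rw [Prod.ext_iff, Prod.ext_iff] at h'
      obtain ⟨ha, -, -⟩ := h'
      linear_combination (-v.val.1 - v.val.2.1) * ha
    · have h' : (v.val.2.1, v.val.1, v.val.2.2) = _ := h
      rw [Prod.ext_iff, Prod.ext_iff] at h'
      obtain ⟨ha, -, -⟩ := h'
      simp only [signChange1] at ha
      linear_combination (-v.val.1 - v.val.2.1) * ha
    · have h' : (v.val.2.1, v.val.1, v.val.2.2) = _ := h
      rw [Prod.ext_iff, Prod.ext_iff] at h'
      obtain ⟨ha, -, -⟩ := h'
      simp only [signChange2] at ha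
      linear_combination (v.val.1 - v.val.2.1) * ha
    · have h' : (v.val.2.1, v.val.1, v.val.2.2) = _ := h
      rw [Prod.ext_iff, Prod.ext_iff] at h'
      obtain ⟨ha, -, -⟩ := h'
      simp only [signChange3] at ha
      linear_combination (v.val.1 - v.val.2.1) * ha
  · intro h
    have hfac : (v.val.1 - v.val.2.1) * (v.val.1 + v.val.2.1) = 0 := by linear_combination h
    rcases mul_eq_zero.mp hfac with hc | hc
    · refine Or.inl ?_
      show (v.val.2.1, v.val.1, v.val.2.2) = v.val
      rw [Prod.ext_iff, Prod.ext_iff]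
      exact ⟨by linear_combination -hc, by linear_combination hc, rfl⟩
    · refine Or.inr (Or.inr (Or.inr ?_))
      show (v.val.2.1, v.val.1, v.val.2.2) = signChange3 p v.val
      simp only [signChange3]
      rw [Prod.ext_iff, Prod.ext_iff]
      exact ⟨by linear_combination hc, by linear_combination hc, rfl⟩

lemma mem_support_iff (v : MarkoffStar p) :
    Quot.mk (kleinRel p) v ∈ (sigmaY p).support ↔ ¬ v.val.1 ^ 2 = v.val.2.1 ^ 2 := by
  rw [Equiv.Perm.mem_support, sigma_mk, ← rel_swap_iff v]
  constructor
  · intro h hrel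
    exact h ((mk_eq _ _).mpr ((klein_equiv (p := p)).symm hrel))
  · intro h heq
    exact h ((klein_equiv (p := p)).symm ((mk_eq _ _).mp heq))

end Quotient

-- ## Part 3: orbit counting

section Counting

variable (hp2 : p ≠ 2)

include hp2

lemma a_eq_neg (a : K) (h : a = -a) : a = 0 := by
  have h2 : (2 : K) * a = 0 := by linear_combination h
  rcases mul_eq_zero.mp h2 with h' | h'
  · exact absurd h' (two_ne hp2)
  · exact h'

lemma dist1 (v : MarkoffStar p) : v ≠ N1 v := by
  intro h
  rw [Subtype.ext_iff] at h
  have h' : v.val = (v.val.1, -v.val.2.1, -v.val.2.2) := h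
  rw [Prod.ext_iff, Prod.ext_iff] at h'
  obtain ⟨-, hb, hc⟩ := h'
  exact zero23 v (a_eq_neg hp2 _ hb) (a_eq_neg hp2 _ hc)

lemma dist2 (v : MarkoffStar p) : v ≠ N2 v := by
  intro h
  rw [Subtype.ext_iff] at h
  have h' : v.val = (-v.val.1, v.val.2.1, -v.val.2.2) := h
  rw [Prod.ext_iff, Prod.ext_iff] at h'
  obtain ⟨ha, -, hc⟩ := h'
  exact zero13 v (a_eq_neg hp2 _ ha) (a_eq_neg hp2 _ hc)

lemma dist3 (v : MarkoffStar p) : v ≠ N3 v := by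
  intro h
  rw [Subtype.ext_iff] at h
  have h' : v.val = (-v.val.1, -v.val.2.1, v.val.2.2) := h
  rw [Prod.ext_iff, Prod.ext_iff] at h'
  obtain ⟨ha, hb, -⟩ := h'
  exact zero12 v (a_eq_neg hp2 _ ha) (a_eq_neg hp2 _ hb)

lemma dist12 (v : MarkoffStar p) : N1 v ≠ N2 v := by
  intro h
  rw [Subtype.ext_iff] at h
  have h' : ((v.val.1, -v.val.2.1, -v.val.2.2) : K × K × K)
      = (-v.val.1, v.val.2.1, -v.val.2.2) := h
  simp only [Prod.mk.injEq] at h'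
  obtain ⟨ha, hb, -⟩ := h'
  refine zero12 v (a_eq_neg hp2 _ ha) (a_eq_neg hp2 _ ?_)
  linear_combination -hb

lemma dist13 (v : MarkoffStar p) : N1 v ≠ N3 v := by
  intro h
  rw [Subtype.ext_iff] at h
  have h' : ((v.val.1, -v.val.2.1, -v.val.2.2) : K × K × K)
      = (-v.val.1, -v.val.2.1, v.val.2.2) := h
  simp only [Prod.mk.injEq] at h'
  obtain ⟨ha, -, hc⟩ := h'
  refine zero13 v (a_eq_neg hp2 _ ha) (a_eq_neg hp2 _ ?_)
  linear_combination -hc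

lemma dist23 (v : MarkoffStar p) : N2 v ≠ N3 v := by
  intro h
  rw [Subtype.ext_iff] at h
  have h' : ((-v.val.1, v.val.2.1, -v.val.2.2) : K × K × K)
      = (-v.val.1, -v.val.2.1, v.val.2.2) := h
  simp only [Prod.mk.injEq] at h'
  obtain ⟨-, hb, hc⟩ := h'
  refine zero23 v (a_eq_neg hp2 _ hb) (a_eq_neg hp2 _ ?_)
  linear_combination -hc

lemma card_orbit (v : MarkoffStar p) :
    ({v, N1 v, N2 v, N3 v} : Finset (MarkoffStar p)).card = 4 := by
  rw [Finset.card_insert_of_notMem, Finset.card_insert_of_notMem,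
    Finset.card_insert_of_notMem, Finset.card_singleton]
  · simp only [mem_singleton]
    exact dist23 hp2 v
  · simp only [mem_insert, mem_singleton]
    push_neg
    exact ⟨dist12 hp2 v, dist13 hp2 v⟩
  · simp only [mem_insert, mem_singleton]
    push_neg
    exact ⟨dist1 hp2 v, dist2 hp2 v, dist3 hp2 v⟩

lemma fiber_eq (v0 : MarkoffStar p) (h0 : ¬ v0.val.1 ^ 2 = v0.val.2.1 ^ 2) :
    ((univ.filter fun v : MarkoffStar p => ¬ v.val.1 ^ 2 = v.val.2.1 ^ 2).filter
      fun v => Quot.mk (kleinRel p) v = Quot.mk (kleinRel p) v0)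
    = {v0, N1 v0, N2 v0, N3 v0} := by
  ext w
  simp only [Finset.filter_filter, mem_filter, mem_univ, true_and, mem_insert, mem_singleton]
  constructor
  · rintro ⟨-, hq⟩
    have hrel : kleinRel p v0 w := (klein_equiv (p := p)).symm ((mk_eq _ _).mp hq)
    rcases hrel with h | h | h | h
    · exact Or.inl (Subtype.ext h)
    · exact Or.inr (Or.inl (Subtype.ext h))
    · exact Or.inr (Or.inr (Or.inl (Subtype.ext h)))
    · exact Or.inr (Or.inr (Or.inr (Subtype.ext h)))
  · rintro (rfl | rfl | rfl | rfl)
    · exact ⟨h0, rfl⟩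
    · refine ⟨fun h => h0 (by simp only [N1_val, signChange1] at h; linear_combination h), ?_⟩
      refine (mk_eq _ _).mpr (Or.inr (Or.inl ?_))
      exact (sc11 v0.val).symm
    · refine ⟨fun h => h0 (by simp only [N2_val, signChange2] at h; linear_combination h), ?_⟩
      refine (mk_eq _ _).mpr (Or.inr (Or.inr (Or.inl ?_)))
      exact (sc22 v0.val).symm
    · refine ⟨fun h => h0 (by simp only [N3_val, signChange3] at h; linear_combination h), ?_⟩
      refine (mk_eq _ _).mpr (Or.inr (Or.inr (Or.inr ?_)))
      exact (sc33 v0.val).symm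

lemma support_card_eq :
    (univ.filter fun v : MarkoffStar p => ¬ v.val.1 ^ 2 = v.val.2.1 ^ 2).card
      = (sigmaY p).support.card * 4 := by
  have h1 : ∀ v ∈ (univ.filter fun v : MarkoffStar p => ¬ v.val.1 ^ 2 = v.val.2.1 ^ 2),
      Quot.mk (kleinRel p) v ∈ (sigmaY p).support := by
    intro v hv
    exact (mem_support_iff v).mpr (mem_filter.mp hv).2
  rw [Finset.card_eq_sum_card_fiberwise h1]
  have h3 : ∀ y ∈ (sigmaY p).support,
      ((univ.filter fun v : MarkoffStar p => ¬ v.val.1 ^ 2 = v.val.2.1 ^ 2).filter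
        fun v => Quot.mk (kleinRel p) v = y).card = 4 := by
    intro y hy
    obtain ⟨v0, rfl⟩ := Quot.exists_rep y
    have h0 : ¬ v0.val.1 ^ 2 = v0.val.2.1 ^ 2 := (mem_support_iff v0).mp hy
    rw [fiber_eq hp2 v0 h0, card_orbit hp2 v0]
  rw [Finset.sum_congr rfl h3, Finset.sum_const, smul_eq_mul]

lemma subtype_card_eq :
    (univ.filter fun v : MarkoffStar p => ¬ v.val.1 ^ 2 = v.val.2.1 ^ 2).card
      = (univ.filter fun v : K × K × K =>
          (v.1 ^ 2 + v.2.1 ^ 2 + v.2.2 ^ 2 = v.1 * v.2.1 * v.2.2) ∧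
            ¬ v.1 ^ 2 = v.2.1 ^ 2).card := by
  refine Finset.card_bij (fun v _ => v.val) ?_ ?_ ?_
  · intro v hv
    simp only [mem_filter, mem_univ, true_and] at hv ⊢
    exact ⟨v.2.1, hv⟩
  · intro a ha b hb h
    exact Subtype.ext h
  · intro u hu
    simp only [mem_filter, mem_univ, true_and] at hu
    obtain ⟨hP, hne⟩ := hu
    have h0 : u ≠ ((0 : K), (0 : K), (0 : K)) := by
      rintro rfl
      exact hne (by norm_num)
    refine ⟨⟨u, hP, h0⟩, ?_, rfl⟩
    simp only [mem_filter, mem_univ, true_and]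
    exact hne

omit hp2 in
lemma sign_involution {α : Type*} [DecidableEq α] [Fintype α] (σ : Equiv.Perm α)
    (h : σ * σ = 1) :
    ∃ m : ℕ, σ.support.card = 2 * m ∧ Equiv.Perm.sign σ = (-1) ^ m := by
  have horder : orderOf σ ∣ 2 := orderOf_dvd_of_pow_eq_one (by rw [pow_two]; exact h)
  have hall : ∀ n ∈ σ.cycleType, n = 2 := fun n hn =>
    le_antisymm (Nat.le_of_dvd (by norm_num)
        ((Equiv.Perm.dvd_of_mem_cycleType hn).trans horder))
      (Equiv.Perm.two_le_of_mem_cycleType hn)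
  have hrep : σ.cycleType = Multiset.replicate (Multiset.card σ.cycleType) 2 :=
    Multiset.eq_replicate_card.mpr hall
  have hsum : σ.cycleType.sum = 2 * Multiset.card σ.cycleType := by
    conv_lhs => rw [hrep]
    rw [Multiset.sum_replicate, smul_eq_mul, mul_comm]
  refine ⟨Multiset.card σ.cycleType, ?_, ?_⟩
  · rw [← Equiv.Perm.sum_cycleType, hsum]
  · rw [Equiv.Perm.sign_of_cycleType, hsum, pow_add, pow_mul]
    norm_num

end Counting

end MkAux

/-- Let `p ≡ 3 (mod 8)` be prime.  The coordinate transposition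
`(x,y,z) ↦ (y,x,z)` induces a permutation of the set `Y_{-2}(F_p)` of `N`-orbits
on `X*_{-2}(F_p)`; it is even if `p ≡ 3 (mod 16)` and odd if `p ≡ 11 (mod 16)`. -/
theorem swap_induced_perm_sign (p : ℕ) [Fact p.Prime] (hp : p % 8 = 3) :
    ∃ σ : Equiv.Perm (YMinusTwo p), Induces p (swapXY p) σ ∧
      (p % 16 = 3 → Equiv.Perm.sign σ = 1) ∧
      (p % 16 = 11 → Equiv.Perm.sign σ = -1) := by
  classical
  have hp2 : p ≠ 2 := by omega
  obtain ⟨m, hm, hs⟩ := MkAux.sign_involution (MkAux.sigmaY p) MkAux.sigma_sq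
  have h1 := MkAux.support_card_eq (p := p) hp2
  have h2 := MkAux.subtype_card_eq (p := p) hp2
  have h3 := MkAux.cardA (p := p) hp2 hp
  have h12 := h1.symm.trans h2
  have h8 : 8 * (m : ℤ) = (p : ℤ) ^ 2 - 5 * p + 6 := by
    have hcast := congrArg (fun n : ℕ => (n : ℤ)) h12
    push_cast at hcast
    rw [h3] at hcast
    have hmc : ((MkAux.sigmaY p).support.card : ℤ) = 2 * m := by exact_mod_cast hm
    linarith
  refine ⟨MkAux.sigmaY p, MkAux.sigma_induces, ?_, ?_⟩
  · intro h16
    have hk : p = 16 * (p / 16) + 3 := by omega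
    set k : ℤ := ((p / 16 : ℕ) : ℤ) with hkdef
    have hpk : (p : ℤ) = 16 * k + 3 := by rw [hkdef]; exact_mod_cast hk
    have hmk : (m : ℤ) = 2 * (k * (16 * k + 1)) := by
      have hr : (8 : ℤ) * (2 * (k * (16 * k + 1))) = (16 * k + 3) ^ 2 - 5 * (16 * k + 3) + 6 := by
        ring
      rw [← hpk] at hr
      linarith
    have hme : Even m := by
      have he : Even (m : ℤ) := ⟨k * (16 * k + 1), by linarith⟩
      exact_mod_cast he
    rw [hs]
    exact Even.neg_one_pow hme
  · intro h16
    have hk : p = 16 * (p / 16) + 11 := by omega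
    set k : ℤ := ((p / 16 : ℕ) : ℤ) with hkdef
    have hpk : (p : ℤ) = 16 * k + 11 := by rw [hkdef]; exact_mod_cast hk
    have hmk : (m : ℤ) = 2 * (16 * k ^ 2 + 17 * k + 4) + 1 := by
      have hr : (8 : ℤ) * (2 * (16 * k ^ 2 + 17 * k + 4) + 1)
          = (16 * k + 11) ^ 2 - 5 * (16 * k + 11) + 6 := by ring
      rw [← hpk] at hr
      linarith
    have hmo : Odd m := by
      have ho : Odd (m : ℤ) := ⟨16 * k ^ 2 + 17 * k + 4, by linarith⟩
      exact_mod_cast ho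
    rw [hs]
    exact Odd.neg_one_pow hmo
end
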